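/- arXiv:2010.06348 — 7 statements merged into one kernel-verified Lean document; each statement's English description precedes it below -/
import Mathlib

section
/- For any bouncing solution x of the breathing circle billiard, the angular momentum C(t) := x₁(t)·ẋ₂(t) − x₂(t)·ẋ₁(t) is constant: it takes one and the same value on all the open intervals between consecutive impact times. -/
noncomputable section

/-- Euclidean dot product on `ℝ × ℝ`. -/
def dot2 (u w : ℝ × ℝ) : ℝ := u.1 * w.1 + u.2 * w.2

/-- Euclidean norm on `ℝ × ℝ`. -/
def norm2 (u : ℝ × ℝ) : ℝ := Real.sqrt (dot2 u u)

/-- A bouncing solution of the breathing circle billiard with boundary radius `R`: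
a continuous trajectory `x`, a strictly increasing bi-infinite sequence of impact times `t`
without accumulation points, and velocities `v n` on the free-flight intervals
(`ẍ = 0` between impacts means the derivative is a constant `v n` there).
At each impact the particle is on the boundary, strictly inside in between, and the
elastic impact law holds: the tangential component of the velocity is conserved and the
normal component is reflected with the impulse `2 R'(t n)` of the moving wall. -/
structure BouncingSolution (R : ℝ → ℝ) where
  x : ℝ → ℝ × ℝ
  t : ℤ → ℝ
  v : ℤ → ℝ × ℝ
  cont : Continuous x
  tmono : StrictMono t
  ttop : Filter.Tendsto t Filter.atTop Filter.atTop
  tbot : Filter.Tendsto t Filter.atBot Filter.atBot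
  free : ∀ n : ℤ, ∀ s ∈ Set.Ioo (t n) (t (n + 1)), HasDerivAt x (v n) s
  inside : ∀ n : ℤ, ∀ s ∈ Set.Ioo (t n) (t (n + 1)), norm2 (x s) < R s
  impact : ∀ n : ℤ, norm2 (x (t n)) = R (t n)
  bounce_tan : ∀ n : ℤ,
    dot2 (v n) (-(x (t n)).2 / R (t n), (x (t n)).1 / R (t n)) =
      dot2 (v (n - 1)) (-(x (t n)).2 / R (t n), (x (t n)).1 / R (t n))
  bounce_norm : ∀ n : ℤ,
    dot2 (v n) ((x (t n)).1 / R (t n), (x (t n)).2 / R (t n)) =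
      -dot2 (v (n - 1)) ((x (t n)).1 / R (t n), (x (t n)).2 / R (t n)) + 2 * deriv R (t n)

/-! Between two impacts `x` moves along the constant velocity `v n`, so `x × v n` is constant;
at an impact the wall changes only the normal component of the velocity, and the normal is
parallel to `x (t n)`, so `x × v` does not jump either. -/

def angularMomentum (p v : ℝ × ℝ) : ℝ := p.1 * v.2 - p.2 * v.1

theorem HasDerivAt.angularMomentum_const {x : ℝ → ℝ × ℝ} {v : ℝ × ℝ} {s : ℝ}
    (hx : HasDerivAt x v s) : HasDerivAt (fun u => angularMomentum (x u) v) 0 s := by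
  have hx₁ : HasDerivAt (fun u => (x u).1) v.1 s := hx.fst
  have hx₂ : HasDerivAt (fun u => (x u).2) v.2 s := hx.snd
  have h := (hx₁.mul_const v.2).sub (hx₂.mul_const v.1)
  rwa [mul_comm v.1, sub_self] at h

theorem dot2_tangent_eq_angularMomentum_div (p v : ℝ × ℝ) (r : ℝ) :
    dot2 v (-p.2 / r, p.1 / r) = angularMomentum p v / r := by
  simp only [dot2, angularMomentum]
  ring

theorem eq_left_of_hasDerivAt_zero_of_mem_Icc {f : ℝ → ℝ} {a b : ℝ}
    (hf : ContinuousOn f (Set.Icc a b)) (hf' : ∀ x ∈ Set.Ioo a b, HasDerivAt f 0 x) :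
    ∀ y ∈ Set.Icc a b, f y = f a := by
  rintro y ⟨hay, hyb⟩
  rcases hay.eq_or_lt with rfl | hay
  · rfl
  obtain ⟨c, -, hslope⟩ := exists_hasDerivAt_eq_slope f (fun _ => 0) hay
    (hf.mono (Set.Icc_subset_Icc_right hyb)) fun x hx => hf' x ⟨hx.1, hx.2.trans_le hyb⟩
  have hdiff := (div_eq_zero_iff.mp hslope.symm).resolve_right (sub_ne_zero.2 hay.ne')
  exact sub_eq_zero.mp hdiff

namespace BouncingSolution

variable {R : ℝ → ℝ} (bs : BouncingSolution R)

theorem angularMomentum_eq_of_mem_Icc (n : ℤ) :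
    ∀ s ∈ Set.Icc (bs.t n) (bs.t (n + 1)),
      angularMomentum (bs.x s) (bs.v n) = angularMomentum (bs.x (bs.t n)) (bs.v n) :=
  eq_left_of_hasDerivAt_zero_of_mem_Icc
    ((bs.cont.fst.mul continuous_const).sub (bs.cont.snd.mul continuous_const)).continuousOn
    fun s hs => (bs.free n s hs).angularMomentum_const

theorem angularMomentum_impact {n : ℤ} (hR : R (bs.t n) ≠ 0) :
    angularMomentum (bs.x (bs.t n)) (bs.v n) =
      angularMomentum (bs.x (bs.t n)) (bs.v (n - 1)) := by
  have h := bs.bounce_tan n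
  rw [dot2_tangent_eq_angularMomentum_div, dot2_tangent_eq_angularMomentum_div] at h
  exact (div_left_inj' hR).mp h

theorem angularMomentum_at_impact_eq (hR : ∀ s, R s ≠ 0) (n : ℤ) :
    angularMomentum (bs.x (bs.t n)) (bs.v n) = angularMomentum (bs.x (bs.t 0)) (bs.v 0) := by
  have hperiodic :
      Function.Periodic (fun k : ℤ => angularMomentum (bs.x (bs.t k)) (bs.v k)) 1 := by
    intro k
    have hflight := bs.angularMomentum_eq_of_mem_Icc k (bs.t (k + 1))
      ⟨(bs.tmono (lt_add_one k)).le, le_rfl⟩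
    simpa only [add_sub_cancel_right, ← hflight] using
      bs.angularMomentum_impact (hR (bs.t (k + 1)))
  simpa using hperiodic.int_mul_eq n

end BouncingSolution

theorem angular_momentum_constant_general (R : ℝ → ℝ)
    (hpos : ∀ s, 0 < R s)
    (bs : BouncingSolution R) :
    ∃ C : ℝ, ∀ n : ℤ, ∀ s ∈ Set.Ioo (bs.t n) (bs.t (n + 1)),
      (bs.x s).1 * (bs.v n).2 - (bs.x s).2 * (bs.v n).1 = C :=
  ⟨angularMomentum (bs.x (bs.t 0)) (bs.v 0), fun n s hs =>
    (bs.angularMomentum_eq_of_mem_Icc n s (Set.Ioo_subset_Icc_self hs)).trans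
      (bs.angularMomentum_at_impact_eq (fun s => (hpos s).ne') n)⟩

/-- For any bouncing solution of the breathing circle billiard the angular
momentum `C(t) = x₁ ẋ₂ − x₂ ẋ₁` takes one and the same value on all the open intervals
between consecutive impact times. -/
theorem angular_momentum_constant (R : ℝ → ℝ)
    (hR : ContDiff ℝ 1 R) (hpos : ∀ s, 0 < R s)
    (bs : BouncingSolution R) :
    ∃ C : ℝ, ∀ n : ℤ, ∀ s ∈ Set.Ioo (bs.t n) (bs.t (n + 1)),
      (bs.x s).1 * (bs.v n).2 - (bs.x s).2 * (bs.v n).1 = C :=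
  angular_momentum_constant_general R hpos bs
end
end

section
/- If ε ∈ (0, √(1 − 1/(π−1)²)), then there exist δ > 0 and M > 0 such that the function R(t) := M + δ·sin(2πt) belongs to the class 𝓡̃. -/
set_option maxHeartbeats 1000000


noncomputable section

/-- Sup-norm of a function (for a continuous 1-periodic function this is the maximum of `|f|`). -/
def supNorm (f : ℝ → ℝ) : ℝ := sSup (Set.range fun t => |f t|)

/-- Minimum value of `R` (attained for a continuous 1-periodic `R`). -/
def Rmin (R : ℝ → ℝ) : ℝ := sInf (Set.range R)

/-- Maximum value of `R` (attained for a continuous 1-periodic `R`). -/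
def Rmax (R : ℝ → ℝ) : ℝ := sSup (Set.range R)

/-- The constant `σ = min { R_min/(2‖R'‖) , 2√(1+√(1−ε²))·R_min/√‖(R²)''‖ }`. -/
def sigmaR (R : ℝ → ℝ) (ε : ℝ) : ℝ :=
  min (Rmin R / (2 * supNorm (deriv R)))
    (2 * Real.sqrt (1 + Real.sqrt (1 - ε ^ 2)) * Rmin R /
      Real.sqrt (supNorm (deriv (deriv (fun t => R t ^ 2)))))

/-- `R` belongs to the class `𝓡̃` (with parameter `ε`): `R` is `C²`, 1-periodic and strictly
positive, `σ > 4`, and there is `t̄ ∈ [0,1)` with `R''(t̄)·R_min + ‖R'‖·R_max < 0` such that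
`3 < 1 + √(2R_max²/(−R''(t̄)R_min − ‖R'‖R_max)) < −1 + √(2R_min²/(2R_max²/σ² + ‖R'‖R_max))`,
`R'(t̄) = 0` and `R''(t̄) < −2R_max²/(σ²·R_min)`. -/
def inRtilde (R : ℝ → ℝ) (ε : ℝ) : Prop :=
  ContDiff ℝ 2 R ∧ (∀ t, R (t + 1) = R t) ∧ (∀ t, 0 < R t) ∧
  4 < sigmaR R ε ∧
  ∃ tb ∈ Set.Ico (0 : ℝ) 1,
    deriv (deriv R) tb * Rmin R + supNorm (deriv R) * Rmax R < 0 ∧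
    3 < 1 + Real.sqrt (2 * Rmax R ^ 2 /
        (-(deriv (deriv R) tb) * Rmin R - supNorm (deriv R) * Rmax R)) ∧
    1 + Real.sqrt (2 * Rmax R ^ 2 /
        (-(deriv (deriv R) tb) * Rmin R - supNorm (deriv R) * Rmax R)) <
      -1 + Real.sqrt (2 * Rmin R ^ 2 /
        (2 * Rmax R ^ 2 / sigmaR R ε ^ 2 + supNorm (deriv R) * Rmax R)) ∧
    deriv R tb = 0 ∧
    deriv (deriv R) tb < -(2 * Rmax R ^ 2 / (sigmaR R ε ^ 2 * Rmin R))

namespace RtildeAux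
open Real

lemma supNorm_le {f : ℝ → ℝ} {C : ℝ} (h : ∀ t, |f t| ≤ C) : supNorm f ≤ C :=
  csSup_le (Set.range_nonempty _) (by rintro _ ⟨t, rfl⟩; exact h t)

lemma le_supNorm {f : ℝ → ℝ} {C : ℝ} (h : ∀ t, |f t| ≤ C) (t : ℝ) : |f t| ≤ supNorm f :=
  le_csSup ⟨C, by rintro _ ⟨s, rfl⟩; exact h s⟩ ⟨t, rfl⟩

lemma le_Rmin {f : ℝ → ℝ} {C : ℝ} (h : ∀ t, C ≤ f t) : C ≤ Rmin f :=
  le_csInf (Set.range_nonempty _) (by rintro _ ⟨t, rfl⟩; exact h t)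

lemma Rmin_le {f : ℝ → ℝ} {C : ℝ} (h : ∀ t, C ≤ f t) (t : ℝ) : Rmin f ≤ f t :=
  csInf_le ⟨C, by rintro _ ⟨s, rfl⟩; exact h s⟩ ⟨t, rfl⟩

lemma Rmax_le {f : ℝ → ℝ} {C : ℝ} (h : ∀ t, f t ≤ C) : Rmax f ≤ C :=
  csSup_le (Set.range_nonempty _) (by rintro _ ⟨t, rfl⟩; exact h t)

lemma le_Rmax {f : ℝ → ℝ} {C : ℝ} (h : ∀ t, f t ≤ C) (t : ℝ) : f t ≤ Rmax f :=
  le_csSup ⟨C, by rintro _ ⟨s, rfl⟩; exact h s⟩ ⟨t, rfl⟩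

lemma hasDerivAt_R (δ t : ℝ) :
    HasDerivAt (fun s => 1 + δ * Real.sin (2*π*s)) (2*π*δ * Real.cos (2*π*t)) t := by
  have h1 : HasDerivAt (fun s : ℝ => 2*π*s) (2*π) t := by
    simpa using (hasDerivAt_id t).const_mul (2*π)
  have h3 := (((Real.hasDerivAt_sin (2*π*t)).comp t h1).const_mul δ).const_add 1
  exact h3.congr_deriv (by ring)

lemma hasDerivAt_R1 (δ t : ℝ) :
    HasDerivAt (fun s => 2*π*δ * Real.cos (2*π*s)) (-(4*π^2*δ * Real.sin (2*π*t))) t := by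
  have h1 : HasDerivAt (fun s : ℝ => 2*π*s) (2*π) t := by
    simpa using (hasDerivAt_id t).const_mul (2*π)
  have h3 := ((Real.hasDerivAt_cos (2*π*t)).comp t h1).const_mul (2*π*δ)
  exact h3.congr_deriv (by ring)

lemma deriv_R (δ : ℝ) : deriv (fun s => 1 + δ * Real.sin (2*π*s)) = fun t => 2*π*δ * Real.cos (2*π*t) :=
  funext fun t => (hasDerivAt_R δ t).deriv

lemma deriv2_R (δ : ℝ) : deriv (deriv (fun s => 1 + δ * Real.sin (2*π*s)))
    = fun t => -(4*π^2*δ * Real.sin (2*π*t)) := by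
  rw [deriv_R]; exact funext fun t => (hasDerivAt_R1 δ t).deriv

lemma hasDerivAt_Rsq (δ t : ℝ) :
    HasDerivAt (fun s => (1 + δ * Real.sin (2*π*s))^2)
      (2*(1 + δ * Real.sin (2*π*t))*(2*π*δ * Real.cos (2*π*t))) t := by
  have h := (hasDerivAt_R δ t).pow 2
  exact h.congr_deriv (by ring)

lemma hasDerivAt_Rsq' (δ t : ℝ) :
    HasDerivAt (fun s => 2*(1 + δ * Real.sin (2*π*s))*(2*π*δ * Real.cos (2*π*s)))
      (2*(2*π*δ * Real.cos (2*π*t))^2 + 2*(1 + δ * Real.sin (2*π*t))*(-(4*π^2*δ * Real.sin (2*π*t)))) t := by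
  have h := (((hasDerivAt_R δ t).const_mul 2).mul (hasDerivAt_R1 δ t))
  exact h.congr_deriv (by ring)

lemma deriv2_Rsq (δ : ℝ) : deriv (deriv (fun s => (1 + δ * Real.sin (2*π*s))^2))
    = fun t => 2*(2*π*δ * Real.cos (2*π*t))^2 + 2*(1 + δ * Real.sin (2*π*t))*(-(4*π^2*δ * Real.sin (2*π*t))) := by
  have h : deriv (fun s => (1 + δ * Real.sin (2*π*s))^2)
      = fun t => 2*(1 + δ * Real.sin (2*π*t))*(2*π*δ * Real.cos (2*π*t)) :=
    funext fun t => (hasDerivAt_Rsq δ t).deriv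
  rw [h]; exact funext fun t => (hasDerivAt_Rsq' δ t).deriv

lemma contDiff_R (δ : ℝ) : ContDiff ℝ 2 (fun t => 1 + δ * Real.sin (2*π*t)) := by
  apply ContDiff.add contDiff_const
  apply ContDiff.mul contDiff_const
  exact (Real.contDiff_sin.of_le le_top).comp (contDiff_const.mul contDiff_id)

lemma glue (ε δ : ℝ) (hδ0 : 0 < δ) (hδ1 : δ < 1)
    (hC1 : 8*δ*(1 + Real.sqrt (1 - ε^2)) ≤ 1)
    (hC2 : 32*π^2*δ*(1+2*δ) < (1 + Real.sqrt (1 - ε^2))*(1-δ)^2)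
    (hC3 : 1+δ < 2*π*(1-δ))
    (hC4 : 8*π^2*δ < 1)
    (hC5 : Real.sqrt (2*(1+δ)^2/(4*π^2*(1-δ) - 2*π*(1+δ))) + 2*Real.sqrt δ
      < Real.sqrt (2*(1-δ)^2/(4*π^2*(1+2*δ)*(1+δ)^2/((1 + Real.sqrt (1 - ε^2))*(1-δ)^2) + 2*π*(1+δ))))
    (hC6 : (1+δ)^2*(1+2*δ) < (1 + Real.sqrt (1 - ε^2))*(1-δ)^3) :
    inRtilde (fun t => 1 + δ * Real.sin (2 * π * t)) ε := by
  have hπ := Real.pi_pos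
  set K := 1 + Real.sqrt (1 - ε^2) with hKdef
  have hK1 : 1 ≤ K := le_add_of_nonneg_right (Real.sqrt_nonneg _)
  have hK0 : (0:ℝ) < K := lt_of_lt_of_le one_pos hK1
  have h1δ : 0 < 1 - δ := by linarith only [hδ1]
  have h12δ : (0:ℝ) < 1 + 2*δ := by linarith only [hδ0]
  set m := Rmin (fun t => 1 + δ * Real.sin (2*π*t)) with hmdef
  set X := Rmax (fun t => 1 + δ * Real.sin (2*π*t)) with hXdef
  set N := supNorm (deriv (fun t => 1 + δ * Real.sin (2*π*t))) with hNdef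
  set g := supNorm (deriv (deriv (fun t => (1 + δ * Real.sin (2*π*t))^2))) with hgdef
  set σ := sigmaR (fun t => 1 + δ * Real.sin (2*π*t)) ε with hσdef
  clear_value m X N g σ
  -- bounds for the first derivative sup norm
  have hNb : ∀ t, |2*π*δ * Real.cos (2*π*t)| ≤ 2*π*δ := by
    intro t
    rw [abs_mul, abs_of_pos (show (0:ℝ) < 2*π*δ by positivity)]
    have := mul_le_mul_of_nonneg_left (Real.abs_cos_le_one (2*π*t))
      (show (0:ℝ) ≤ 2*π*δ by positivity)
    simpa using this
  have hN_ub : N ≤ 2*π*δ := by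
    rw [hNdef, deriv_R]; exact supNorm_le hNb
  have hN_lb : 2*π*δ ≤ N := by
    rw [hNdef, deriv_R]
    have h0 := le_supNorm hNb 0
    simp only [mul_zero, Real.cos_zero, mul_one] at h0
    rwa [abs_of_pos (by positivity)] at h0
  have hN_pos : 0 < N := lt_of_lt_of_le (by positivity) hN_lb
  -- bounds for Rmin / Rmax
  have hRlb : ∀ t, 1 - δ ≤ 1 + δ * Real.sin (2*π*t) := by
    intro t; nlinarith only [Real.neg_one_le_sin (2*π*t), hδ0]
  have hRub : ∀ t, 1 + δ * Real.sin (2*π*t) ≤ 1 + δ := by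
    intro t; nlinarith only [Real.sin_le_one (2*π*t), hδ0]
  have hm_lb : 1 - δ ≤ m := by rw [hmdef]; exact le_Rmin hRlb
  have hm_ub : m ≤ 1 := by
    rw [hmdef]
    have h0 := Rmin_le hRlb 0
    simpa using h0
  have hM_lb : 1 ≤ X := by
    rw [hXdef]
    have h0 := le_Rmax hRub 0
    simpa using h0
  have hM_ub : X ≤ 1 + δ := by rw [hXdef]; exact Rmax_le hRub
  have hm_pos : 0 < m := by linarith only [hm_lb, hδ1]
  have hM_pos : 0 < X := by linarith only [hM_lb]
  -- bounds for the second derivative of R²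
  have hGb : ∀ t, |2*(2*π*δ * Real.cos (2*π*t))^2 + 2*(1 + δ * Real.sin (2*π*t))*(-(4*π^2*δ * Real.sin (2*π*t)))|
      ≤ 8*π^2*δ*(1+2*δ) := by
    intro t
    have hs1 := Real.neg_one_le_sin (2*π*t)
    have hs2 := Real.sin_le_one (2*π*t)
    have hcsq : (Real.cos (2*π*t))^2 ≤ 1 := by
      nlinarith only [Real.neg_one_le_cos (2*π*t), Real.cos_le_one (2*π*t)]
    have hssq : (Real.sin (2*π*t))^2 ≤ 1 := by nlinarith only [hs1, hs2]
    have hp2 : (0:ℝ) < π^2 := by positivity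
    have t1 : π^2*δ^2*(Real.cos (2*π*t))^2 ≤ π^2*δ^2 := by
      nlinarith only [hcsq, sq_nonneg (π*δ)]
    have t2a : π^2*δ*Real.sin (2*π*t) ≤ π^2*δ := by
      nlinarith only [hs2, mul_pos hp2 hδ0]
    have t2b : -(π^2*δ) ≤ π^2*δ*Real.sin (2*π*t) := by
      nlinarith only [hs1, mul_pos hp2 hδ0]
    have t3a : π^2*δ^2*(Real.sin (2*π*t))^2 ≤ π^2*δ^2 := by
      nlinarith only [hssq, sq_nonneg (π*δ)]
    have t3b : 0 ≤ π^2*δ^2*(Real.sin (2*π*t))^2 := by positivity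
    have t4 : 0 ≤ π^2*δ^2*(Real.cos (2*π*t))^2 := by positivity
    rw [abs_le]; constructor
    · nlinarith only [t1, t2a, t2b, t3a, t3b, t4, mul_pos hp2 hδ0, sq_nonneg (π*δ)]
    · nlinarith only [t1, t2a, t2b, t3a, t3b, t4, mul_pos hp2 hδ0, sq_nonneg (π*δ)]
  have hG_ub : g ≤ 8*π^2*δ*(1+2*δ) := by
    rw [hgdef, deriv2_Rsq]; exact supNorm_le hGb
  have hG_lb : 8*π^2*δ*(1-δ) ≤ g := by
    rw [hgdef, deriv2_Rsq]
    have hθ : 2*π*(-(1/4) : ℝ) = -(π/2) := by ring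
    have h0 : |2*(2*π*δ * Real.cos (2*π*(-(1/4):ℝ)))^2 + 2*(1 + δ * Real.sin (2*π*(-(1/4):ℝ)))*(-(4*π^2*δ * Real.sin (2*π*(-(1/4):ℝ))))|
        ≤ supNorm (fun t => 2*(2*π*δ * Real.cos (2*π*t))^2 + 2*(1 + δ * Real.sin (2*π*t))*(-(4*π^2*δ * Real.sin (2*π*t)))) :=
      le_supNorm hGb (-(1/4))
    have e : |2*(2*π*δ * Real.cos (2*π*(-(1/4):ℝ)))^2 + 2*(1 + δ * Real.sin (2*π*(-(1/4):ℝ)))*(-(4*π^2*δ * Real.sin (2*π*(-(1/4):ℝ))))| = 8*π^2*δ*(1-δ) := by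
      rw [hθ, Real.sin_neg, Real.cos_neg, Real.sin_pi_div_two, Real.cos_pi_div_two]
      rw [abs_of_nonneg (by nlinarith only [mul_pos (show (0:ℝ) < 8*π^2*δ by positivity) h1δ])]
      ring
    rwa [e] at h0
  have hG_pos : 0 < g := lt_of_lt_of_le (mul_pos (by positivity) h1δ) hG_lb
  -- σ lower bound
  set S := K*(1-δ)^2/(2*π^2*δ*(1+2*δ)) with hSdef
  clear_value S
  have hS_pos : 0 < S := by
    rw [hSdef]; exact div_pos (mul_pos hK0 (pow_pos h1δ 2)) (by positivity)
  have hsS : Real.sqrt S ^ 2 = S := Real.sq_sqrt hS_pos.le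
  have hs_pos : 0 < Real.sqrt S := Real.sqrt_pos.mpr hS_pos
  have hσs : Real.sqrt S ≤ σ := by
    rw [hσdef]
    simp only [sigmaR]
    rw [← hmdef, ← hNdef]
    apply le_min
    · have u_lb : (1-δ)/(4*π*δ) ≤ m / (2 * N) := by
        apply div_le_div₀ hm_pos.le hm_lb (by linarith only [hN_pos])
        linarith only [hN_ub]
      have hSu : S ≤ ((1-δ)/(4*π*δ))^2 := by
        rw [div_pow, hSdef, div_le_div_iff₀ (by positivity) (by positivity)]
        have c1 : 8*δ*K ≤ 1 + 2*δ := by linarith only [hC1, hδ0]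
        have c2 := mul_le_mul_of_nonneg_left c1
          (show (0:ℝ) ≤ 2*π^2*δ*(1-δ)^2 by positivity)
        nlinarith only [c2]
      calc Real.sqrt S ≤ Real.sqrt (((1-δ)/(4*π*δ))^2) := Real.sqrt_le_sqrt hSu
        _ = (1-δ)/(4*π*δ) := Real.sqrt_sq (div_nonneg h1δ.le (by positivity))
        _ ≤ _ := u_lb
    · have hfold : supNorm (deriv (deriv fun t => (1 + δ * Real.sin (2*π*t)) ^ 2)) = g := by
        rw [hgdef]
      rw [hfold]
      have hrhs : (0:ℝ) ≤ 2 * Real.sqrt K * m / Real.sqrt g :=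
        div_nonneg (mul_nonneg (mul_nonneg (by norm_num) (Real.sqrt_nonneg _)) hm_pos.le) (Real.sqrt_nonneg _)
      have hsq : (2 * Real.sqrt K * m / Real.sqrt g)^2 = 4 * K * m^2 / g := by
        rw [div_pow, mul_pow, mul_pow, Real.sq_sqrt hK0.le, Real.sq_sqrt hG_pos.le]
        norm_num
      have hq : (1-δ)^2 ≤ m^2 := by nlinarith only [hm_lb, h1δ]
      have hSle : S ≤ 4 * K * m^2 / g := by
        rw [hSdef, div_le_div_iff₀ (by positivity) hG_pos]
        calc K*(1-δ)^2 * g ≤ K*(1-δ)^2 * (8*π^2*δ*(1+2*δ)) := by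
              apply mul_le_mul_of_nonneg_left hG_ub (by positivity)
          _ ≤ (K * m^2) * (8*π^2*δ*(1+2*δ)) := by
              have h5 := mul_le_mul_of_nonneg_left hq hK0.le
              apply mul_le_mul_of_nonneg_right h5 (by positivity)
          _ = 4 * K * m^2 * (2*π^2*δ*(1+2*δ)) := by ring
      calc Real.sqrt S ≤ Real.sqrt ((2 * Real.sqrt K * m / Real.sqrt g)^2) := by
            apply Real.sqrt_le_sqrt; rw [hsq]; exact hSle
        _ = _ := Real.sqrt_sq hrhs
  have h4s : (4:ℝ) < Real.sqrt S := by
    rw [show (4:ℝ) = Real.sqrt 16 by rw [show (16:ℝ) = 4^2 by norm_num, Real.sqrt_sq]; norm_num]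
    apply Real.sqrt_lt_sqrt (by norm_num)
    rw [hSdef, lt_div_iff₀ (by positivity)]
    linarith only [hC2]
  have hσ4 : 4 < σ := lt_of_lt_of_le h4s hσs
  have hσ_pos : 0 < σ := by linarith only [hσ4]
  have hσsq : S ≤ σ ^ 2 := by
    have h := mul_le_mul hσs hσs hs_pos.le hσ_pos.le
    nlinarith only [h, hsS]
  -- values at tb = 1/4
  have h1v : deriv (fun t => 1 + δ * Real.sin (2*π*t)) (1/4 : ℝ) = 0 := by
    rw [deriv_R]
    show 2*π*δ * Real.cos (2*π*(1/4 : ℝ)) = 0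
    rw [show 2*π*(1/4:ℝ) = π/2 by ring, Real.cos_pi_div_two, mul_zero]
  have h2v : deriv (deriv (fun t => 1 + δ * Real.sin (2*π*t))) (1/4 : ℝ) = -(4*π^2*δ) := by
    rw [deriv2_R]
    show -(4*π^2*δ * Real.sin (2*π*(1/4 : ℝ))) = -(4*π^2*δ)
    rw [show 2*π*(1/4:ℝ) = π/2 by ring, Real.sin_pi_div_two, mul_one]
  -- product bound
  have hprod : N * X ≤ 2*π*δ*(1+δ) := mul_le_mul hN_ub hM_ub hM_pos.le (by positivity)
  have hprod0 : 0 ≤ N * X := mul_nonneg hN_pos.le hM_pos.le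
  -- condition (i)
  have h_i : -(4*π^2*δ) * m + N * X < 0 := by
    have h1 := mul_le_mul_of_nonneg_left hm_lb (show (0:ℝ) ≤ 4*π^2*δ by positivity)
    have h2 := mul_lt_mul_of_pos_left hC3 (show (0:ℝ) < 2*π*δ by positivity)
    nlinarith only [h1, h2, hprod]
  -- the denominator of condition (ii)
  have hden_pos : 0 < 4*π^2*δ*m - N*X := by linarith only [h_i]
  have hden_ub : 4*π^2*δ*m - N*X ≤ 4*π^2*δ := by
    have h1 := mul_le_mul_of_nonneg_left hm_ub (show (0:ℝ) ≤ 4*π^2*δ by positivity)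
    linarith only [h1, hprod0]
  -- condition (ii) left
  have hX4 : 4 < 2*X^2/(4*π^2*δ*m - N*X) := by
    have h1 : 2/(4*π^2*δ) ≤ 2*X^2/(4*π^2*δ*m - N*X) := by
      apply div_le_div₀ (by positivity) (by nlinarith only [hM_lb]) hden_pos hden_ub
    have h2 : (4:ℝ) < 2/(4*π^2*δ) := by
      rw [lt_div_iff₀ (by positivity)]; linarith only [hC4]
    linarith only [h1, h2]
  have h_iia : (3:ℝ) < 1 + Real.sqrt (2*X^2/(4*π^2*δ*m - N*X)) := by
    have h1 : (2:ℝ) < Real.sqrt (2*X^2/(4*π^2*δ*m - N*X)) := by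
      rw [Real.lt_sqrt (by norm_num)]
      norm_num
      linarith only [hX4]
    linarith only [h1]
  -- condition (ii) middle
  have hF_pos : 0 < 4*π^2*(1-δ) - 2*π*(1+δ) := by
    have h2 := mul_lt_mul_of_pos_left hC3 (show (0:ℝ) < 2*π by positivity)
    nlinarith only [h2]
  have hden_lb : δ*(4*π^2*(1-δ) - 2*π*(1+δ)) ≤ 4*π^2*δ*m - N*X := by
    have h1 := mul_le_mul_of_nonneg_left hm_lb (show (0:ℝ) ≤ 4*π^2*δ by positivity)
    nlinarith only [h1, hprod]
  have hXsq_ub : 2*X^2 ≤ 2*(1+δ)^2 := by nlinarith only [hM_ub, hM_pos]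
  have hX_ub2 : 2*X^2/(4*π^2*δ*m - N*X) ≤ 2*(1+δ)^2/(δ*(4*π^2*(1-δ) - 2*π*(1+δ))) :=
    div_le_div₀ (by positivity) hXsq_ub (mul_pos hδ0 hF_pos) hden_lb
  have hE_pos : 0 < 4*π^2*(1+2*δ)*(1+δ)^2/(K*(1-δ)^2) + 2*π*(1+δ) := by
    apply add_pos (div_pos (by positivity) (mul_pos hK0 (pow_pos h1δ 2))) (by positivity)
  have hD2_ub : 2*X^2/σ^2 + N*X ≤ δ*(4*π^2*(1+2*δ)*(1+δ)^2/(K*(1-δ)^2) + 2*π*(1+δ)) := by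
    have e1 : 2*(1+δ)^2/S = δ*(4*π^2*(1+2*δ)*(1+δ)^2/(K*(1-δ)^2)) := by
      rw [hSdef]
      field_simp [hK0.ne', h1δ.ne', hδ0.ne', hπ.ne', h12δ.ne']
      ring
    have h1 : 2*X^2/σ^2 ≤ 2*(1+δ)^2/S := div_le_div₀ (by positivity) hXsq_ub hS_pos hσsq
    have h2 : δ*(4*π^2*(1+2*δ)*(1+δ)^2/(K*(1-δ)^2) + 2*π*(1+δ))
        = δ*(4*π^2*(1+2*δ)*(1+δ)^2/(K*(1-δ)^2)) + δ*(2*π*(1+δ)) := by ring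
    rw [h2, ← e1]
    have h3 : N*X ≤ δ*(2*π*(1+δ)) := by linarith only [hprod]
    linarith only [h1, h3]
  have hD2_pos : 0 < 2*X^2/σ^2 + N*X :=
    add_pos_of_pos_of_nonneg (div_pos (mul_pos two_pos (pow_pos hM_pos 2)) (pow_pos hσ_pos 2)) hprod0
  have hY_lb : 2*(1-δ)^2/(δ*(4*π^2*(1+2*δ)*(1+δ)^2/(K*(1-δ)^2) + 2*π*(1+δ))) ≤ 2*m^2/(2*X^2/σ^2 + N*X) := by
    apply div_le_div₀ (by positivity) (by nlinarith only [hm_lb, h1δ]) hD2_pos hD2_ub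
  have hsδ : 0 < Real.sqrt δ := Real.sqrt_pos.mpr hδ0
  have h_iib : 1 + Real.sqrt (2*X^2/(4*π^2*δ*m - N*X)) < -1 + Real.sqrt (2*m^2/(2*X^2/σ^2 + N*X)) := by
    have e1 : 2*(1+δ)^2/(δ*(4*π^2*(1-δ) - 2*π*(1+δ)))
        = (2*(1+δ)^2/(4*π^2*(1-δ) - 2*π*(1+δ)))/δ := by
      rw [div_div]; ring_nf
    have e2 : 2*(1-δ)^2/(δ*(4*π^2*(1+2*δ)*(1+δ)^2/(K*(1-δ)^2) + 2*π*(1+δ)))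
        = (2*(1-δ)^2/(4*π^2*(1+2*δ)*(1+δ)^2/(K*(1-δ)^2) + 2*π*(1+δ)))/δ := by
      rw [div_div]; ring_nf
    have hsq1 : Real.sqrt (2*X^2/(4*π^2*δ*m - N*X))
        ≤ Real.sqrt (2*(1+δ)^2/(4*π^2*(1-δ) - 2*π*(1+δ))) / Real.sqrt δ := by
      rw [← Real.sqrt_div (div_nonneg (by positivity) hF_pos.le) δ, ← e1]
      exact Real.sqrt_le_sqrt hX_ub2
    have hsq2 : Real.sqrt (2*(1-δ)^2/(4*π^2*(1+2*δ)*(1+δ)^2/(K*(1-δ)^2) + 2*π*(1+δ))) / Real.sqrt δ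
        ≤ Real.sqrt (2*m^2/(2*X^2/σ^2 + N*X)) := by
      rw [← Real.sqrt_div (div_nonneg (by positivity) hE_pos.le) δ, ← e2]
      exact Real.sqrt_le_sqrt hY_lb
    have key : Real.sqrt (2*(1+δ)^2/(4*π^2*(1-δ) - 2*π*(1+δ))) / Real.sqrt δ + 2
        < Real.sqrt (2*(1-δ)^2/(4*π^2*(1+2*δ)*(1+δ)^2/(K*(1-δ)^2) + 2*π*(1+δ))) / Real.sqrt δ := by
      have h := div_lt_div_of_pos_right hC5 hsδ
      rw [add_div] at h
      have e3 : 2*Real.sqrt δ/Real.sqrt δ = 2 := by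
        rw [mul_div_assoc, div_self (ne_of_gt hsδ), mul_one]
      rwa [e3] at h
    linarith only [hsq1, hsq2, key]
  -- condition (iii)
  have h_iii : -(4*π^2*δ) < -(2*X^2/(σ^2*m)) := by
    have h1 : 2*X^2/(σ^2*m) ≤ 2*(1+δ)^2/(S*(1-δ)) := by
      apply div_le_div₀ (by positivity) hXsq_ub (mul_pos hS_pos h1δ)
      exact mul_le_mul hσsq hm_lb h1δ.le (sq_nonneg σ)
    have h2 : 2*(1+δ)^2/(S*(1-δ)) < 4*π^2*δ := by
      rw [div_lt_iff₀ (mul_pos hS_pos h1δ)]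
      have e : 4*π^2*δ*(S*(1-δ)) = 2*K*(1-δ)^3/(1+2*δ) := by
        rw [hSdef]
        field_simp [hK0.ne', h1δ.ne', hδ0.ne', hπ.ne', h12δ.ne']
        ring
      rw [e, lt_div_iff₀ h12δ]
      linarith only [hC6]
    linarith only [h1, h2]
  -- assemble
  have hper : ∀ t : ℝ, 1 + δ * Real.sin (2*π*(t+1)) = 1 + δ * Real.sin (2*π*t) := by
    intro t
    rw [show 2*π*(t+1) = 2*π*t + 2*π by ring, Real.sin_add_two_pi]
  have hpos : ∀ t : ℝ, 0 < 1 + δ * Real.sin (2*π*t) := by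
    intro t; nlinarith only [Real.neg_one_le_sin (2*π*t), hδ0, hδ1]
  unfold inRtilde
  rw [← hσdef, ← hmdef, ← hXdef, ← hNdef]
  refine ⟨contDiff_R δ, hper, hpos, hσ4, 1/4, by norm_num, ?_, ?_, ?_, h1v, ?_⟩
  · rw [h2v]; exact h_i
  · rw [h2v, neg_neg]; exact h_iia
  · rw [h2v, neg_neg]; exact h_iib
  · rw [h2v]; exact h_iii

lemma exists_delta (ε : ℝ) (hε0 : 0 < ε)
    (hε1 : ε < Real.sqrt (1 - 1 / (Real.pi - 1) ^ 2)) :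
    ∃ δ : ℝ, 0 < δ ∧ δ < 1 ∧
      8*δ*(1 + Real.sqrt (1 - ε^2)) ≤ 1 ∧
      32*π^2*δ*(1+2*δ) < (1 + Real.sqrt (1 - ε^2))*(1-δ)^2 ∧
      1+δ < 2*π*(1-δ) ∧
      8*π^2*δ < 1 ∧
      (Real.sqrt (2*(1+δ)^2/(4*π^2*(1-δ) - 2*π*(1+δ))) + 2*Real.sqrt δ
        < Real.sqrt (2*(1-δ)^2/(4*π^2*(1+2*δ)*(1+δ)^2/((1 + Real.sqrt (1 - ε^2))*(1-δ)^2) + 2*π*(1+δ)))) ∧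
      (1+δ)^2*(1+2*δ) < (1 + Real.sqrt (1 - ε^2))*(1-δ)^3 := by
  have hπ := Real.pi_pos
  have hπ3 := Real.pi_gt_three
  have hπ1 : (0:ℝ) < π - 1 := by linarith
  set K := 1 + Real.sqrt (1 - ε^2) with hKdef
  have hKle : 1 ≤ K := le_add_of_nonneg_right (Real.sqrt_nonneg _)
  have hK0 : (0:ℝ) < K := lt_of_lt_of_le one_pos hKle
  -- the key inequality K > π/(π-1)
  have hε2 : ε^2 < 1 - 1/(π-1)^2 := (Real.lt_sqrt hε0.le).mp hε1
  have hc : 1/(π-1) < Real.sqrt (1 - ε^2) := by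
    rw [Real.lt_sqrt (le_of_lt (div_pos one_pos hπ1))]
    rw [div_pow, one_pow]
    linarith
  have hK1 : 1 < K := by
    have := div_pos one_pos hπ1
    rw [hKdef]; linarith
  have hπK : π < K*(π-1) := by
    have h1 : π/(π-1) = 1 + 1/(π-1) := by field_simp; ring
    have h2 : π/(π-1) < K := by rw [h1, hKdef]; linarith
    calc π = (π/(π-1))*(π-1) := by field_simp
      _ < K*(π-1) := by exact mul_lt_mul_of_pos_right h2 hπ1
  -- eventual-inequality helper
  have hev : ∀ (f g₂ : ℝ → ℝ), ContinuousAt f 0 → ContinuousAt g₂ 0 → f 0 < g₂ 0 →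
      ∀ᶠ δ in nhdsWithin 0 (Set.Ioi (0:ℝ)), f δ < g₂ δ := by
    intro f g₂ hf hg h
    exact (hf.tendsto.mono_left nhdsWithin_le_nhds).eventually_lt
      (hg.tendsto.mono_left nhdsWithin_le_nhds) h
  have h1 : ∀ᶠ δ in nhdsWithin 0 (Set.Ioi (0:ℝ)), (fun δ : ℝ => δ) δ < (fun _ : ℝ => (1:ℝ)) δ :=
    hev _ _ (continuousAt_id) (continuousAt_const) (by norm_num)
  have h2 : ∀ᶠ δ in nhdsWithin 0 (Set.Ioi (0:ℝ)),
      (fun δ : ℝ => 8*δ*K) δ < (fun _ : ℝ => (1:ℝ)) δ :=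
    hev _ _ (by fun_prop) (continuousAt_const) (by norm_num)
  have h3 : ∀ᶠ δ in nhdsWithin 0 (Set.Ioi (0:ℝ)),
      (fun δ : ℝ => 32*π^2*δ*(1+2*δ)) δ < (fun δ : ℝ => K*(1-δ)^2) δ :=
    hev _ _ (by fun_prop) (by fun_prop) (by norm_num; linarith)
  have h4 : ∀ᶠ δ in nhdsWithin 0 (Set.Ioi (0:ℝ)),
      (fun δ : ℝ => 1+δ) δ < (fun δ : ℝ => 2*π*(1-δ)) δ :=
    hev _ _ (by fun_prop) (by fun_prop) (by norm_num; linarith)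
  have h5 : ∀ᶠ δ in nhdsWithin 0 (Set.Ioi (0:ℝ)),
      (fun δ : ℝ => 8*π^2*δ) δ < (fun _ : ℝ => (1:ℝ)) δ :=
    hev _ _ (by fun_prop) (continuousAt_const) (by norm_num)
  have h7 : ∀ᶠ δ in nhdsWithin 0 (Set.Ioi (0:ℝ)),
      (fun δ : ℝ => (1+δ)^2*(1+2*δ)) δ < (fun δ : ℝ => K*(1-δ)^3) δ :=
    hev _ _ (by fun_prop) (by fun_prop) (by norm_num; linarith)
  -- the main condition C5
  have hF0 : (0:ℝ) < 4*π^2 - 2*π := by nlinarith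
  have hE0 : (0:ℝ) < 4*π^2/K + 2*π := by positivity
  have hBA : 4*π^2/K + 2*π < 4*π^2 - 2*π := by
    have h8 : 4*π^2/K < 4*π^2 - 4*π := by
      rw [div_lt_iff₀ hK0]
      nlinarith [mul_lt_mul_of_pos_left hπK (show (0:ℝ) < 4*π by linarith)]
    linarith
  have hcontP : ContinuousAt (fun δ : ℝ => 2*(1+δ)^2/(4*π^2*(1-δ) - 2*π*(1+δ))) 0 := by
    apply ContinuousAt.div (by fun_prop) (by fun_prop)
    norm_num
    linarith
  have hcontE : ContinuousAt (fun δ : ℝ => 4*π^2*(1+2*δ)*(1+δ)^2/(K*(1-δ)^2) + 2*π*(1+δ)) 0 := by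
    apply ContinuousAt.add _ (by fun_prop)
    apply ContinuousAt.div (by fun_prop) (by fun_prop)
    norm_num
    exact hK0.ne'
  have hcontQ : ContinuousAt (fun δ : ℝ => 2*(1-δ)^2/(4*π^2*(1+2*δ)*(1+δ)^2/(K*(1-δ)^2) + 2*π*(1+δ))) 0 := by
    apply ContinuousAt.div (by fun_prop) hcontE
    norm_num
    positivity
  have h6 : ∀ᶠ δ in nhdsWithin 0 (Set.Ioi (0:ℝ)),
      (fun δ : ℝ => Real.sqrt (2*(1+δ)^2/(4*π^2*(1-δ) - 2*π*(1+δ))) + 2*Real.sqrt δ) δ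
      < (fun δ : ℝ => Real.sqrt (2*(1-δ)^2/(4*π^2*(1+2*δ)*(1+δ)^2/(K*(1-δ)^2) + 2*π*(1+δ)))) δ := by
    apply hev
    · exact ContinuousAt.add hcontP.sqrt (by
        have : ContinuousAt (fun δ : ℝ => Real.sqrt δ) 0 := Real.continuous_sqrt.continuousAt
        fun_prop)
    · exact hcontQ.sqrt
    · show Real.sqrt (2*(1+0)^2/(4*π^2*(1-0) - 2*π*(1+0))) + 2*Real.sqrt 0
        < Real.sqrt (2*(1-0)^2/(4*π^2*(1+2*0)*(1+0)^2/(K*(1-0)^2) + 2*π*(1+0)))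
      rw [Real.sqrt_zero]
      norm_num
      have e1 : 4*π^2*(1-(0:ℝ)) - 2*π*(1+0) = 4*π^2 - 2*π := by norm_num
      have e2 : (4*π^2*(1+2*(0:ℝ))*(1+0)^2/(K*(1-0)^2) + 2*π*(1+0)) = 4*π^2/K + 2*π := by
        norm_num
      exact div_lt_div_of_pos_left (Real.sqrt_pos.mpr two_pos) (Real.sqrt_pos.mpr hE0)
        (Real.sqrt_lt_sqrt hE0.le hBA)
  have h0 : ∀ᶠ δ in nhdsWithin 0 (Set.Ioi (0:ℝ)), 0 < δ :=
    eventually_mem_nhdsWithin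
  have := (((((((h0.and h1).and h2).and h3).and h4).and h5).and h6).and h7).exists
  obtain ⟨δ, ⟨⟨⟨⟨⟨⟨⟨hd0, hd1⟩, hd2⟩, hd3⟩, hd4⟩, hd5⟩, hd6⟩, hd7⟩⟩ := this
  exact ⟨δ, hd0, hd1, le_of_lt hd2, hd3, hd4, hd5, hd6, hd7⟩

end RtildeAux

/-- If `ε ∈ (0, √(1 − 1/(π−1)²))`, then there exist `δ > 0` and `M > 0` such
that `R(t) = M + δ sin(2πt)` belongs to the class `𝓡̃`. -/
theorem class_Rtilde_contains_one_mode (ε : ℝ) (hε0 : 0 < ε)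
    (hε1 : ε < Real.sqrt (1 - 1 / (Real.pi - 1) ^ 2)) :
    ∃ δ : ℝ, 0 < δ ∧ ∃ M : ℝ, 0 < M ∧
      inRtilde (fun t => M + δ * Real.sin (2 * Real.pi * t)) ε := by
  obtain ⟨δ, hδ0, hδ1, hC1, hC2, hC3, hC4, hC5, hC6⟩ := RtildeAux.exists_delta ε hε0 hε1
  exact ⟨δ, hδ0, 1, one_pos, RtildeAux.glue ε δ hδ0 hδ1 hC1 hC2 hC3 hC4 hC5 hC6⟩
end
end

section
/- Fix ε ∈ (0,1) and c > 0, and let t0 < t1 with τ := t1 − t0 satisfying: τ < ε·R_min²/c, τ < R_min/(2‖R'‖), and τ < 2√(1+√(1−ε²))·R_min/√‖(R²)''‖. Then the Dirichlet solution r satisfies: r''(t) = c²/r(t)³ for all t ∈ (t0,t1); r(t0) = R(t0) and r(t1) = R(t1); r(t) < R(t) for all t ∈ (t0,t1); r'(t0) < min{0, R'(t0)}; and r'(t1) > max{0, 2R'(t1)}. -/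
noncomputable section

/-- `√(R(t0)²R(t1)² − c²(t1−t0)²)`. -/
def Ssq (R : ℝ → ℝ) (c t0 t1 : ℝ) : ℝ :=
  Real.sqrt (R t0 ^ 2 * R t1 ^ 2 - c ^ 2 * (t1 - t0) ^ 2)

/-- `A(t0,t1) = (R(t0)² + R(t1)² + 2√(R(t0)²R(t1)² − c²(t1−t0)²))/(t1−t0)²`. -/
def Afun (R : ℝ → ℝ) (c t0 t1 : ℝ) : ℝ :=
  (R t0 ^ 2 + R t1 ^ 2 + 2 * Ssq R c t0 t1) / (t1 - t0) ^ 2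

/-- `B = −( t0 + (R(t0)² + √(R(t0)²R(t1)² − c²(t1−t0)²))/((t1−t0)·A) )`. -/
def Bfun (R : ℝ → ℝ) (c t0 t1 : ℝ) : ℝ :=
  -(t0 + (R t0 ^ 2 + Ssq R c t0 t1) / ((t1 - t0) * Afun R c t0 t1))

/-- The Dirichlet solution `r(t) = √((A²(t+B)² + c²)/A)`. -/
def dirich (R : ℝ → ℝ) (c t0 t1 t : ℝ) : ℝ :=
  Real.sqrt ((Afun R c t0 t1 ^ 2 * (t + Bfun R c t0 t1) ^ 2 + c ^ 2) / Afun R c t0 t1)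

/-- The generating function
`h(t0,t1) = ½(t1−t0)·A(t0,t1) + c·arctan( c(t1−t0)/√(R(t0)²R(t1)² − c²(t1−t0)²) )`. -/
def hgen (R : ℝ → ℝ) (c t0 t1 : ℝ) : ℝ :=
  (1 / 2) * (t1 - t0) * Afun R c t0 t1 +
    c * Real.arctan (c * (t1 - t0) / Ssq R c t0 t1)

/-- `∂₁h`, the partial derivative of `h` in its first argument. -/
def d1h (R : ℝ → ℝ) (c t0 t1 : ℝ) : ℝ := deriv (fun s => hgen R c s t1) t0

/-- `∂₂h`, the partial derivative of `h` in its second argument. -/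
def d2h (R : ℝ → ℝ) (c t0 t1 : ℝ) : ℝ := deriv (fun s => hgen R c t0 s) t1

/-- `∂₁₂h`, the mixed second partial derivative of `h`. -/
def d12h (R : ℝ → ℝ) (c t0 t1 : ℝ) : ℝ := deriv (fun s => d1h R c t0 s) t1

/-! The Dirichlet solution `r = √(A (t + B)² + c² / A)` is the distance to the origin of a uniform
straight-line motion with angular momentum `c`, so it solves the free radial equation
`r'' = c² / r³`; with `S² = R(t0)² R(t1)² - c² τ²` the constants `A`, `B` make `r = R` at `t0`,
and they are symmetric under `t0 ↔ t1`, which gives `r = R` at `t1` as well.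
Since `(r²)'' = 2A` while the time-gap conditions give `‖(R²)''‖ < 2A`, the function `R² - r²` is
strictly concave and vanishes at both endpoints, hence `r < R` in between; here the first
condition gives `S > √(1 - ε²) R_min²`, so `2Aτ² > 4 (1 + √(1 - ε²)) R_min² > τ² ‖(R²)''‖` by
the third. At the endpoints `|r'| = (R² + S) / (τ R) ≥ R / τ > 2 ‖R'‖`. -/

open Set Function

theorem mul_lt_of_lt_div_of_nonneg {a b c : ℝ} (hb : 0 ≤ b) (hc : 0 < c) (h : a < c / b) :
    b * a < c := by
  rcases hb.eq_or_lt with rfl | hb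
  · simpa using hc
  · rwa [lt_div_iff₀ hb, mul_comm] at h

theorem Function.Periodic.deriv {𝕜 F : Type*} [NontriviallyNormedField 𝕜] [NormedAddCommGroup F]
    [NormedSpace 𝕜 F] {f : 𝕜 → F} {p : 𝕜} (hf : Periodic f p) : Periodic (deriv f) p := fun t => by
  rw [← deriv_comp_add_const, show (fun x => f (x + p)) = f from funext hf]

section SupNorm

variable {f : ℝ → ℝ} {p : ℝ}

theorem abs_le_supNorm (hf : Continuous f) (hp : Periodic f p) (hp0 : p ≠ 0) (t : ℝ) :
    |f t| ≤ supNorm f :=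
  le_csSup ((hp.comp abs).compact_of_continuous hp0 hf.abs).bddAbove (mem_range_self t)

theorem supNorm_nonneg (hf : Continuous f) (hp : Periodic f p) (hp0 : p ≠ 0) : 0 ≤ supNorm f :=
  (abs_nonneg _).trans (abs_le_supNorm hf hp hp0 0)

theorem Rmin_le (hf : Continuous f) (hp : Periodic f p) (hp0 : p ≠ 0) (t : ℝ) : Rmin f ≤ f t :=
  csInf_le (hp.compact_of_continuous hp0 hf).bddBelow (mem_range_self t)

theorem Rmin_pos (hf : Continuous f) (hp : Periodic f p) (hp0 : p ≠ 0) (hpos : ∀ t, 0 < f t) :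
    0 < Rmin f := by
  obtain ⟨t, ht⟩ := (hp.compact_of_continuous hp0 hf).sInf_mem (range_nonempty f)
  rw [Rmin, ← ht]
  exact hpos t

end SupNorm

theorem pos_of_deriv2_neg {f : ℝ → ℝ} {a b : ℝ} (hab : a < b) (hf : ContinuousOn f (Icc a b))
    (hf'' : ∀ x ∈ Ioo a b, deriv^[2] f x < 0) (ha : 0 ≤ f a) (hb : 0 ≤ f b) :
    ∀ x ∈ Ioo a b, 0 < f x := by
  have hconc : StrictConcaveOn ℝ (Icc a b) f :=
    strictConcaveOn_of_deriv2_neg (convex_Icc a b) hf (by rwa [interior_Icc])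
  intro x hx
  have := hconc.lt_on_openSegment (left_mem_Icc.2 hab.le) (right_mem_Icc.2 hab.le) hab.ne
    (by rwa [openSegment_eq_Ioo hab])
  exact (le_min ha hb).trans_lt this

def freeOrbitRadius (A B c t : ℝ) : ℝ := √((A ^ 2 * (t + B) ^ 2 + c ^ 2) / A)

section FreeOrbitRadius

variable {A B c : ℝ}

theorem freeOrbitRadius_sq (hA : 0 < A) (t : ℝ) :
    freeOrbitRadius A B c t ^ 2 = A * (t + B) ^ 2 + c ^ 2 / A := by
  rw [freeOrbitRadius, Real.sq_sqrt (by positivity)]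
  field_simp

theorem freeOrbitRadius_pos (hA : 0 < A) (hc : c ≠ 0) (t : ℝ) : 0 < freeOrbitRadius A B c t :=
  Real.sqrt_pos.2 (by positivity)

theorem hasDerivAt_freeOrbitRadius (hA : 0 < A) (hc : c ≠ 0) (t : ℝ) :
    HasDerivAt (freeOrbitRadius A B c) (A * (t + B) / freeOrbitRadius A B c t) t := by
  have hr := freeOrbitRadius_pos (B := B) hA hc t
  have hsq : HasDerivAt (fun s => (A ^ 2 * (s + B) ^ 2 + c ^ 2) / A) (2 * A * (t + B)) t := by
    refine (((((hasDerivAt_id' t).add_const B).fun_pow 2).const_mul (A ^ 2)).add_const (c ^ 2)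
      |>.div_const A).congr_deriv ?_
    field_simp
    ring
  refine (hsq.sqrt (by positivity)).congr_deriv ?_
  rw [← freeOrbitRadius]
  field_simp

theorem deriv_deriv_freeOrbitRadius (hA : 0 < A) (hc : c ≠ 0) (t : ℝ) :
    deriv (deriv (freeOrbitRadius A B c)) t = c ^ 2 / freeOrbitRadius A B c t ^ 3 := by
  have hr := freeOrbitRadius_pos (B := B) hA hc t
  have hderiv : deriv (freeOrbitRadius A B c) = fun s => A * (s + B) / freeOrbitRadius A B c s :=
    funext fun s => (hasDerivAt_freeOrbitRadius hA hc s).deriv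
  have hlin : HasDerivAt (fun s => A * (s + B)) A t := by
    simpa using ((hasDerivAt_id t).add_const B).const_mul A
  rw [hderiv, (hlin.fun_div (hasDerivAt_freeOrbitRadius hA hc t) hr.ne').deriv]
  have hsq : A * freeOrbitRadius A B c t ^ 2 = A ^ 2 * (t + B) ^ 2 + c ^ 2 := by
    rw [freeOrbitRadius_sq hA]
    field_simp
  field_simp
  linear_combination hsq

theorem freeOrbitRadius_lt_of_deriv_deriv_sq_lt {R : ℝ → ℝ} {t0 t1 : ℝ} (hA : 0 < A)
    (hR : ContDiff ℝ 2 R) (hpos : ∀ t, 0 < R t) (ht : t0 < t1)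
    (h0 : freeOrbitRadius A B c t0 = R t0) (h1 : freeOrbitRadius A B c t1 = R t1)
    (hR'' : ∀ t ∈ Ioo t0 t1, deriv (deriv fun t => R t ^ 2) t < 2 * A) :
    ∀ t ∈ Ioo t0 t1, freeOrbitRadius A B c t < R t := by
  have hR2 : ContDiff ℝ 2 fun t => R t ^ 2 := hR.pow 2
  set f := fun t => R t ^ 2 - freeOrbitRadius A B c t ^ 2
  have hf : f = fun t => R t ^ 2 - (A * (t + B) ^ 2 + c ^ 2 / A) :=
    funext fun t => by simp only [f, freeOrbitRadius_sq hA]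
  have hf' : deriv f = fun t => deriv (fun t => R t ^ 2) t - 2 * A * (t + B) := by
    refine funext fun x => ?_
    rw [hf]
    refine ((hR2.differentiable two_ne_zero x).hasDerivAt.sub
      (((((hasDerivAt_id' x).add_const B).fun_pow 2).const_mul A).add_const _)).deriv.trans ?_
    ring
  have hf'' (x : ℝ) : deriv^[2] f x = deriv (deriv fun t => R t ^ 2) x - 2 * A := by
    rw [Function.iterate_succ_apply, Function.iterate_one, hf']
    refine ((hR2.differentiable_deriv_two x).hasDerivAt.sub
      (((hasDerivAt_id' x).add_const B).const_mul (2 * A))).deriv.trans ?_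
    ring
  have hfc : ContinuousOn f (Icc t0 t1) := by
    have hRc := hR.continuous
    rw [hf]
    fun_prop
  intro t htI
  have hft := pos_of_deriv2_neg ht hfc
    (fun x hx => by linarith [hf'' x, hR'' x hx]) (by simp [f, h0]) (by simp [f, h1]) t htI
  exact lt_of_pow_lt_pow_left₀ 2 (hpos t).le (sub_pos.1 hft)

end FreeOrbitRadius

section Dirichlet

variable {R : ℝ → ℝ} {c t0 t1 : ℝ}

theorem dirich_eq_freeOrbitRadius :
    dirich R c t0 t1 = freeOrbitRadius (Afun R c t0 t1) (Bfun R c t0 t1) c := rfl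

theorem Ssq_comm : Ssq R c t1 t0 = Ssq R c t0 t1 := by
  unfold Ssq
  ring_nf

theorem Afun_comm : Afun R c t1 t0 = Afun R c t0 t1 := by
  unfold Afun
  rw [Ssq_comm]
  ring

theorem Ssq_sq (hrad : c ^ 2 * (t1 - t0) ^ 2 ≤ R t0 ^ 2 * R t1 ^ 2) :
    Ssq R c t0 t1 ^ 2 = R t0 ^ 2 * R t1 ^ 2 - c ^ 2 * (t1 - t0) ^ 2 :=
  Real.sq_sqrt (sub_nonneg.2 hrad)

theorem Afun_mul_sq (ht : t0 ≠ t1) :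
    Afun R c t0 t1 * (t1 - t0) ^ 2 = R t0 ^ 2 + R t1 ^ 2 + 2 * Ssq R c t0 t1 := by
  have hτ := sub_ne_zero.2 ht.symm
  unfold Afun
  field_simp

theorem Afun_pos (ht : t0 ≠ t1) (h0 : R t0 ≠ 0) : 0 < Afun R c t0 t1 := by
  have hτ := sub_ne_zero.2 ht.symm
  have := Real.sqrt_nonneg (R t0 ^ 2 * R t1 ^ 2 - c ^ 2 * (t1 - t0) ^ 2)
  unfold Afun Ssq
  positivity

theorem Afun_mul_add_Bfun (ht : t0 ≠ t1) (h0 : R t0 ≠ 0) :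
    Afun R c t0 t1 * (t0 + Bfun R c t0 t1) * (t1 - t0) = -(R t0 ^ 2 + Ssq R c t0 t1) := by
  have hτ := sub_ne_zero.2 ht.symm
  have := (Afun_pos (c := c) ht h0).ne'
  unfold Bfun
  field_simp
  ring

theorem Bfun_comm (ht : t0 ≠ t1) (h0 : R t0 ≠ 0) : Bfun R c t1 t0 = Bfun R c t0 t1 := by
  have hτ := sub_ne_zero.2 ht.symm
  have := (Afun_pos (c := c) ht h0).ne'
  have hA := Afun_mul_sq (R := R) (c := c) ht
  unfold Bfun
  rw [Afun_comm, Ssq_comm]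
  field_simp
  linear_combination (t1 - t0) * hA

theorem dirich_comm (ht : t0 ≠ t1) (h0 : R t0 ≠ 0) : dirich R c t1 t0 = dirich R c t0 t1 := by
  unfold dirich
  rw [Afun_comm, Bfun_comm ht h0]

theorem dirich_sq_left (ht : t0 ≠ t1) (h0 : R t0 ≠ 0)
    (hrad : c ^ 2 * (t1 - t0) ^ 2 ≤ R t0 ^ 2 * R t1 ^ 2) : dirich R c t0 t1 t0 ^ 2 = R t0 ^ 2 := by
  have hτ := sub_ne_zero.2 ht.symm
  have hA := Afun_pos (c := c) ht h0
  have hB := Afun_mul_add_Bfun (c := c) ht h0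
  have hA2 := Afun_mul_sq (R := R) (c := c) ht
  have hS := Ssq_sq hrad
  rw [dirich_eq_freeOrbitRadius, freeOrbitRadius_sq hA]
  field_simp
  refine mul_right_cancel₀ (pow_ne_zero 2 hτ) ?_
  linear_combination
    (Afun R c t0 t1 * (t0 + Bfun R c t0 t1) * (t1 - t0) - (R t0 ^ 2 + Ssq R c t0 t1)) * hB + hS
      - R t0 ^ 2 * hA2

theorem dirich_left (ht : t0 ≠ t1) (h0 : 0 < R t0)
    (hrad : c ^ 2 * (t1 - t0) ^ 2 ≤ R t0 ^ 2 * R t1 ^ 2) : dirich R c t0 t1 t0 = R t0 :=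
  (pow_left_inj₀ (Real.sqrt_nonneg _) h0.le two_ne_zero).1 (dirich_sq_left ht h0.ne' hrad)

theorem dirich_right (ht : t0 ≠ t1) (h0 : 0 < R t0) (h1 : 0 < R t1)
    (hrad : c ^ 2 * (t1 - t0) ^ 2 ≤ R t0 ^ 2 * R t1 ^ 2) : dirich R c t0 t1 t1 = R t1 := by
  rw [← dirich_comm ht h0.ne']
  exact dirich_left ht.symm h1 (by linarith)

theorem deriv_dirich_left (ht : t0 ≠ t1) (h0 : 0 < R t0) (hc : c ≠ 0)
    (hrad : c ^ 2 * (t1 - t0) ^ 2 ≤ R t0 ^ 2 * R t1 ^ 2) :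
    deriv (dirich R c t0 t1) t0 = -(R t0 ^ 2 + Ssq R c t0 t1) / ((t1 - t0) * R t0) := by
  have hτ := sub_ne_zero.2 ht.symm
  have hB := Afun_mul_add_Bfun (c := c) ht h0.ne'
  rw [dirich_eq_freeOrbitRadius, (hasDerivAt_freeOrbitRadius (Afun_pos ht h0.ne') hc t0).deriv,
    ← dirich_eq_freeOrbitRadius, dirich_left ht h0 hrad]
  field_simp
  linear_combination hB

theorem deriv_dirich_left_le (ht : t0 < t1) (h0 : 0 < R t0) (hc : c ≠ 0)
    (hrad : c ^ 2 * (t1 - t0) ^ 2 ≤ R t0 ^ 2 * R t1 ^ 2) :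
    deriv (dirich R c t0 t1) t0 ≤ -(R t0 / (t1 - t0)) := by
  have hτ := sub_pos.2 ht
  have hS := Real.sqrt_nonneg (R t0 ^ 2 * R t1 ^ 2 - c ^ 2 * (t1 - t0) ^ 2)
  rw [deriv_dirich_left ht.ne h0 hc hrad, neg_div, neg_le_neg_iff,
    div_le_div_iff₀ hτ (by positivity)]
  unfold Ssq
  nlinarith

theorem le_deriv_dirich_right (ht : t0 < t1) (h0 : 0 < R t0) (h1 : 0 < R t1) (hc : c ≠ 0)
    (hrad : c ^ 2 * (t1 - t0) ^ 2 ≤ R t0 ^ 2 * R t1 ^ 2) :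
    R t1 / (t1 - t0) ≤ deriv (dirich R c t0 t1) t1 := by
  have hτ := sub_pos.2 ht
  have hS := Real.sqrt_nonneg (R t0 ^ 2 * R t1 ^ 2 - c ^ 2 * (t1 - t0) ^ 2)
  rw [← dirich_comm ht.ne h0.ne', deriv_dirich_left ht.ne' h1 hc (by linarith), Ssq_comm,
    neg_div, ← div_neg, ← neg_mul, neg_sub, div_le_div_iff₀ hτ (by positivity)]
  unfold Ssq
  nlinarith

theorem dirich_lt (hR : ContDiff ℝ 2 R) (hpos : ∀ t, 0 < R t) (ht : t0 < t1)
    (hrad : c ^ 2 * (t1 - t0) ^ 2 ≤ R t0 ^ 2 * R t1 ^ 2)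
    (hR'' : ∀ t ∈ Ioo t0 t1, deriv (deriv fun t => R t ^ 2) t < 2 * Afun R c t0 t1) :
    ∀ t ∈ Ioo t0 t1, dirich R c t0 t1 t < R t :=
  freeOrbitRadius_lt_of_deriv_deriv_sq_lt (Afun_pos ht.ne (hpos t0).ne') hR hpos ht
    (dirich_left ht.ne (hpos t0) hrad) (dirich_right ht.ne (hpos t0) (hpos t1) hrad) hR''

end Dirichlet

section TimeGap

variable {R : ℝ → ℝ} {c t0 t1 m : ℝ}

theorem one_sub_sq_mul_pow_four_lt_radicand {ε : ℝ} (hm : 0 ≤ m) (h0 : m ≤ R t0) (h1 : m ≤ R t1)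
    (hcτ : 0 ≤ (t1 - t0) * c) (hτ : (t1 - t0) * c < ε * m ^ 2) :
    (1 - ε ^ 2) * m ^ 4 < R t0 ^ 2 * R t1 ^ 2 - c ^ 2 * (t1 - t0) ^ 2 := by
  have hR : m ^ 2 ≤ R t0 * R t1 := by nlinarith
  have hR2 : (m ^ 2) ^ 2 ≤ (R t0 * R t1) ^ 2 := pow_le_pow_left₀ (by positivity) hR 2
  have hτ2 : ((t1 - t0) * c) ^ 2 < (ε * m ^ 2) ^ 2 := pow_lt_pow_left₀ hτ hcτ two_ne_zero
  nlinarith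

theorem sqrt_one_sub_sq_mul_sq_lt_Ssq {ε : ℝ} (hε : ε ^ 2 ≤ 1)
    (hrad : (1 - ε ^ 2) * m ^ 4 < R t0 ^ 2 * R t1 ^ 2 - c ^ 2 * (t1 - t0) ^ 2) :
    √(1 - ε ^ 2) * m ^ 2 < Ssq R c t0 t1 :=
  calc √(1 - ε ^ 2) * m ^ 2 = √((1 - ε ^ 2) * m ^ 4) := by
        rw [Real.sqrt_mul (sub_nonneg.2 hε), show m ^ 4 = (m ^ 2) ^ 2 by ring,
          Real.sqrt_sq (sq_nonneg m)]
    _ < Ssq R c t0 t1 := Real.sqrt_lt_sqrt (by have := sub_nonneg.2 hε; positivity) hrad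

theorem lt_two_mul_Afun {k M : ℝ} (ht : t0 < t1) (hm : 0 < m) (h0 : m ≤ R t0) (h1 : m ≤ R t1)
    (hk : 0 ≤ k) (hS : k * m ^ 2 ≤ Ssq R c t0 t1) (hM : 0 ≤ M)
    (hτ : t1 - t0 < 2 * √(1 + k) * m / √M) : M < 2 * Afun R c t0 t1 := by
  have hτ0 := sub_pos.2 ht
  have hsq : (√M * (t1 - t0)) ^ 2 < (2 * √(1 + k) * m) ^ 2 :=
    pow_lt_pow_left₀ (mul_lt_of_lt_div_of_nonneg (Real.sqrt_nonneg M) (by positivity) hτ)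
      (by positivity) two_ne_zero
  rw [mul_pow, mul_pow, mul_pow, Real.sq_sqrt hM, Real.sq_sqrt (by positivity)] at hsq
  have hA := Afun_mul_sq (R := R) (c := c) ht.ne
  have : (t1 - t0) ^ 2 * M < (t1 - t0) ^ 2 * (2 * Afun R c t0 t1) := by nlinarith
  exact lt_of_mul_lt_mul_left this (sq_nonneg _)

theorem two_mul_abs_lt_div {x L m a τ : ℝ} (hτ : 0 < τ) (hm : 0 < m) (hma : m ≤ a)
    (hx : |x| ≤ L) (h : τ < m / (2 * L)) : 2 * |x| < a / τ := by
  have hL := mul_lt_of_lt_div_of_nonneg (by linarith [abs_nonneg x]) hm h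
  rw [lt_div_iff₀ hτ]
  nlinarith

end TimeGap

theorem dirichlet_solution_properties_general (R : ℝ → ℝ) (ε c t0 t1 : ℝ)
    (hC : ContDiff ℝ 2 R) (hper : ∀ t, R (t + 1) = R t) (hpos : ∀ t, 0 < R t)
    (hε : ε ∈ Set.Ioo (0 : ℝ) 1) (hc : 0 < c) (ht : t0 < t1)
    (hτ1 : t1 - t0 < ε * Rmin R ^ 2 / c)
    (hτ2 : t1 - t0 < Rmin R / (2 * supNorm (deriv R)))
    (hτ3 : t1 - t0 < 2 * Real.sqrt (1 + Real.sqrt (1 - ε ^ 2)) * Rmin R /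
      Real.sqrt (supNorm (deriv (deriv (fun t => R t ^ 2))))) :
    (∀ t ∈ Set.Ioo t0 t1,
        deriv (deriv (dirich R c t0 t1)) t = c ^ 2 / dirich R c t0 t1 t ^ 3) ∧
    dirich R c t0 t1 t0 = R t0 ∧
    dirich R c t0 t1 t1 = R t1 ∧
    (∀ t ∈ Set.Ioo t0 t1, dirich R c t0 t1 t < R t) ∧
    deriv (dirich R c t0 t1) t0 < min 0 (deriv R t0) ∧
    deriv (dirich R c t0 t1) t1 > max 0 (2 * deriv R t1) := by
  have hτ := sub_pos.2 ht
  have hper' : Periodic R 1 := hper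
  have hper2 : Periodic (deriv (deriv fun t => R t ^ 2)) 1 :=
    (hper'.comp (· ^ 2)).deriv.deriv
  have hε2 : ε ^ 2 ≤ 1 := by nlinarith [hε.1, hε.2]
  have hm := Rmin_pos hC.continuous hper' one_ne_zero hpos
  have hmR := Rmin_le hC.continuous hper' one_ne_zero
  have hR' := abs_le_supNorm (hC.continuous_deriv one_le_two) hper'.deriv one_ne_zero
  have hR2 : Continuous (deriv (deriv fun t => R t ^ 2)) :=
    (hC.pow 2).iterate_deriv' 0 2 |>.continuous
  have hM := supNorm_nonneg hR2 hper2 one_ne_zero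
  have hslope (t : ℝ) := two_mul_abs_lt_div hτ hm (hmR t) (hR' t) hτ2
  have hrad' := one_sub_sq_mul_pow_four_lt_radicand hm.le (hmR t0) (hmR t1) (by positivity)
    ((lt_div_iff₀ hc).1 hτ1)
  have hrad : c ^ 2 * (t1 - t0) ^ 2 ≤ R t0 ^ 2 * R t1 ^ 2 := by
    linarith [mul_nonneg (sub_nonneg.2 hε2) (pow_nonneg hm.le 4)]
  have hA := lt_two_mul_Afun ht hm (hmR t0) (hmR t1) (Real.sqrt_nonneg _)
    (sqrt_one_sub_sq_mul_sq_lt_Ssq hε2 hrad').le hM hτ3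
  refine ⟨fun t _ => deriv_deriv_freeOrbitRadius (Afun_pos ht.ne (hpos t0).ne') hc.ne' t,
    dirich_left ht.ne (hpos t0) hrad, dirich_right ht.ne (hpos t0) (hpos t1) hrad,
    dirich_lt hC hpos ht hrad fun t _ => (le_abs_self _).trans_lt
      ((abs_le_supNorm hR2 hper2 one_ne_zero t).trans_lt hA), ?_, ?_⟩
  · refine (deriv_dirich_left_le ht (hpos t0) hc.ne' hrad).trans_lt (lt_min ?_ ?_) <;>
      linarith [hslope t0, abs_nonneg (deriv R t0), neg_abs_le (deriv R t0)]
  · refine (max_lt ?_ ?_).trans_le (le_deriv_dirich_right ht (hpos t0) (hpos t1) hc.ne' hrad) <;>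
      linarith [hslope t1, abs_nonneg (deriv R t1), le_abs_self (deriv R t1)]

/-- Under the time-gap conditions of Proposition 3.1 the Dirichlet solution
`r` solves the Dirichlet problem: `r'' = c²/r³` on `(t0,t1)`, `r(t0) = R(t0)`, `r(t1) = R(t1)`,
`r < R` on `(t0,t1)`, `r'(t0) < min{0, R'(t0)}` and `r'(t1) > max{0, 2R'(t1)}`. -/
theorem dirichlet_solution_properties (R : ℝ → ℝ) (ε c t0 t1 : ℝ)
    (hC : ContDiff ℝ 2 R) (hper : ∀ t, R (t + 1) = R t) (hpos : ∀ t, 0 < R t)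
    (hnc : ∃ a b, R a ≠ R b)
    (hε : ε ∈ Set.Ioo (0 : ℝ) 1) (hc : 0 < c) (ht : t0 < t1)
    (hτ1 : t1 - t0 < ε * Rmin R ^ 2 / c)
    (hτ2 : t1 - t0 < Rmin R / (2 * supNorm (deriv R)))
    (hτ3 : t1 - t0 < 2 * Real.sqrt (1 + Real.sqrt (1 - ε ^ 2)) * Rmin R /
      Real.sqrt (supNorm (deriv (deriv (fun t => R t ^ 2))))) :
    (∀ t ∈ Set.Ioo t0 t1,
        deriv (deriv (dirich R c t0 t1)) t = c ^ 2 / dirich R c t0 t1 t ^ 3) ∧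
    dirich R c t0 t1 t0 = R t0 ∧
    dirich R c t0 t1 t1 = R t1 ∧
    (∀ t ∈ Set.Ioo t0 t1, dirich R c t0 t1 t < R t) ∧
    deriv (dirich R c t0 t1) t0 < min 0 (deriv R t0) ∧
    deriv (dirich R c t0 t1) t1 > max 0 (2 * deriv R t1) :=
  dirichlet_solution_properties_general R ε c t0 t1 hC hper hpos hε hc ht hτ1 hτ2 hτ3
end
end

section
/- Fix ε ∈ (0,1) and c ∈ (0, ε·R_min²/σ), and let Ω := {(t0,t1) ∈ ℝ² : 0 < t1 − t0 < σ}. Then the generating function h satisfies: (i) h is C² on Ω; (ii) h(t0+1, t1+1) = h(t0,t1) for all (t0,t1) ∈ Ω; (iii) ∂²h/∂t0∂t1 (t0,t1) < 0 for all (t0,t1) ∈ Ω, and ∂²h/∂t0∂t1 (t0,t1) → −∞ as t1 − t0 → 0⁺. -/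
noncomputable section

set_option maxHeartbeats 1000000 in
/-- Auxiliary: a continuous periodic function is bounded by its `supNorm`. -/
theorem GFT.per_abs_le {f : ℝ → ℝ} (hf : Continuous f) (hp : Function.Periodic f 1) (t : ℝ) :
    |f t| ≤ sSup (Set.range fun t => |f t|) := by
  have hsub : (Set.range fun t => |f t|) ⊆ (fun t => |f t|) '' Set.Icc 0 1 := by
    rintro y ⟨x, rfl⟩
    obtain ⟨z, hz, hfz⟩ := hp.exists_mem_Ico₀ one_pos x
    exact ⟨z, ⟨hz.1, hz.2.le⟩, by simp [hfz]⟩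
  have hbdd : BddAbove (Set.range fun t => |f t|) :=
    ((isCompact_Icc.image hf.abs).bddAbove).mono hsub
  exact le_csSup hbdd ⟨t, rfl⟩

set_option maxHeartbeats 1000000 in
/-- Auxiliary: infimum facts for a positive continuous periodic function. -/
theorem GFT.per_inf_le {f : ℝ → ℝ} (hf : Continuous f) (hp : Function.Periodic f 1)
    (hpos : ∀ s, 0 < f s) : (∀ t, sInf (Set.range f) ≤ f t) ∧ 0 < sInf (Set.range f) := by
  have hsub : Set.range f ⊆ f '' Set.Icc 0 1 := by
    rintro y ⟨x, rfl⟩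
    obtain ⟨z, hz, hfz⟩ := hp.exists_mem_Ico₀ one_pos x
    exact ⟨z, ⟨hz.1, hz.2.le⟩, hfz.symm⟩
  have hbdd : BddBelow (Set.range f) :=
    ((isCompact_Icc.image hf).bddBelow).mono hsub
  refine ⟨fun t => csInf_le hbdd ⟨t, rfl⟩, ?_⟩
  obtain ⟨z, hz, hmin⟩ := isCompact_Icc.exists_isMinOn (Set.nonempty_Icc.mpr zero_le_one)
    hf.continuousOn
  have hle : f z ≤ sInf (Set.range f) := by
    apply le_csInf (Set.range_nonempty f)
    rintro y ⟨x, rfl⟩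
    obtain ⟨z', hz', hfz'⟩ := hp.exists_mem_Ico₀ one_pos x
    rw [hfz']
    exact hmin ⟨hz'.1, hz'.2.le⟩
  exact lt_of_lt_of_le (hpos z) hle

set_option maxHeartbeats 1000000 in
/-- The key elementary inequality behind the twist property. -/
theorem GFT.keyIneq (m ra rb u v w S : ℝ) (hm : 0 < m) (hra : m ≤ ra) (hrb : m ≤ rb)
    (hu : |u| ≤ m * ra) (hv : |v| ≤ m * rb)
    (hS : S ^ 2 = ra ^ 2 * rb ^ 2 - w ^ 2) (hSpos : 0 < S) :
    ra ^ 2 * v * (2 * ra ^ 2 + 2 * S + u) - 2 * u * S * (ra ^ 2 + S)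
      - 2 * w ^ 2 * (2 * ra ^ 2 + u)
      ≤ 3 * ra ^ 2 * S * (ra ^ 2 + rb ^ 2 + 2 * S) := by
  have hrapos : 0 < ra := lt_of_lt_of_le hm hra
  have hrbpos : 0 < rb := lt_of_lt_of_le hm hrb
  obtain ⟨hu1, hu2⟩ := abs_le.mp hu
  obtain ⟨hv1, hv2⟩ := abs_le.mp hv
  have hua : m * ra ≤ ra ^ 2 := by nlinarith
  have hvb : m * rb ≤ rb ^ 2 := by nlinarith
  have hS2le : S ^ 2 ≤ (ra * rb) ^ 2 := by nlinarith [sq_nonneg w]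
  have hSab : S ≤ ra * rb := by nlinarith [mul_pos hrapos hrbpos]
  have h2S : 2 * S ≤ ra ^ 2 + rb ^ 2 := by nlinarith [sq_nonneg (ra - rb)]
  have hX : ra ^ 2 * v - 2 * w ^ 2 ≤ 2 * S ^ 2 - ra ^ 2 * rb ^ 2 := by nlinarith [sq_nonneg ra]
  have h2au : 0 ≤ 2 * ra ^ 2 + u := by nlinarith
  have h2au3 : 2 * ra ^ 2 + u ≤ 3 * ra ^ 2 := by nlinarith
  have e2 : 2 * ra ^ 2 * v * S ≤ 2 * ra ^ 2 * rb ^ 2 * S := by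
    have : v ≤ rb ^ 2 := le_trans hv2 hvb
    nlinarith [sq_nonneg ra]
  have e3 : -(2 * u * S * (ra ^ 2 + S)) ≤ 2 * ra ^ 2 * S * (ra ^ 2 + S) := by
    have h1 : -u ≤ ra ^ 2 := by nlinarith
    have h2 : 0 ≤ S * (ra ^ 2 + S) := by positivity
    nlinarith
  rcases le_or_gt (ra ^ 2 * v - 2 * w ^ 2) 0 with hXn | hXp
  · have e1 : (2 * ra ^ 2 + u) * (ra ^ 2 * v - 2 * w ^ 2) ≤ 0 :=
      mul_nonpos_of_nonneg_of_nonpos h2au hXn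
    nlinarith [mul_nonneg (mul_nonneg hSpos.le (sq_nonneg ra)) (sq_nonneg rb),
      mul_nonneg hSpos.le (sq_nonneg ra), mul_nonneg hSpos.le (mul_nonneg hSpos.le (sq_nonneg ra))]
  · have e1 : (2 * ra ^ 2 + u) * (ra ^ 2 * v - 2 * w ^ 2)
        ≤ 3 * ra ^ 2 * (2 * S ^ 2 - ra ^ 2 * rb ^ 2) := by
      have s1 : (2 * ra ^ 2 + u) * (ra ^ 2 * v - 2 * w ^ 2)
          ≤ 3 * ra ^ 2 * (ra ^ 2 * v - 2 * w ^ 2) :=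
        mul_le_mul_of_nonneg_right h2au3 hXp.le
      have s2 : 3 * ra ^ 2 * (ra ^ 2 * v - 2 * w ^ 2)
          ≤ 3 * ra ^ 2 * (2 * S ^ 2 - ra ^ 2 * rb ^ 2) := by
        have : (0:ℝ) ≤ 3 * ra ^ 2 := by positivity
        exact mul_le_mul_of_nonneg_left hX this
      linarith
    have e4 : 2 * ra ^ 2 * S * S ≤ ra ^ 2 * S * (ra ^ 2 + rb ^ 2) := by
      have : (0:ℝ) ≤ ra ^ 2 * S := by positivity
      nlinarith
    nlinarith [mul_nonneg (mul_nonneg hSpos.le (sq_nonneg ra)) (sq_nonneg rb)]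

set_option maxHeartbeats 1000000 in
/-- First partial derivative of the generating function. -/
theorem GFT.hasDerivAt_hgen_fst (R : ℝ → ℝ) (c t0 t1 : ℝ)
    (hR : HasDerivAt R (deriv R t0) t0) (h1 : (0:ℝ) < t1 - t0)
    (hD : 0 < R t0 ^ 2 * R t1 ^ 2 - c ^ 2 * (t1 - t0) ^ 2) :
    HasDerivAt (fun s => hgen R c s t1)
      ((R t0 ^ 2 + R t1 ^ 2 + 2 * Ssq R c t0 t1) / (2 * (t1 - t0) ^ 2)
        + (2 * R t0 * deriv R t0) * (R t0 ^ 2 + Ssq R c t0 t1)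
          / (2 * R t0 ^ 2 * (t1 - t0))) t0 := by
  have hΔ : (t1 - t0) ≠ 0 := ne_of_gt h1
  have hSpos : 0 < Ssq R c t0 t1 := Real.sqrt_pos.mpr hD
  have hS2 : Ssq R c t0 t1 ^ 2 = R t0 ^ 2 * R t1 ^ 2 - c ^ 2 * (t1 - t0) ^ 2 :=
    Real.sq_sqrt hD.le
  have hRt0 : R t0 ≠ 0 := by
    intro h
    rw [h] at hD
    nlinarith [sq_nonneg (c * (t1 - t0)), sq_nonneg (R t1)]
  have hRt1 : R t1 ≠ 0 := by
    intro h
    rw [h] at hD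
    nlinarith [sq_nonneg (c * (t1 - t0)), sq_nonneg (R t0)]
  set S := Ssq R c t0 t1 with hSdef
  set a' := 2 * R t0 * deriv R t0 with ha'
  have hsq : HasDerivAt (fun s => R s ^ 2) a' t0 := by
    simpa [ha', mul_comm] using hR.fun_pow 2
  have hdm : HasDerivAt (fun s => t1 - s) (-1) t0 := by
    simpa using (hasDerivAt_id t0).const_sub t1
  have hdm2 : HasDerivAt (fun s => (t1 - s) ^ 2) (2 * (t1 - t0) * -1) t0 := by
    simpa using hdm.fun_pow 2
  have hDf : HasDerivAt (fun s => R s ^ 2 * R t1 ^ 2 - c ^ 2 * (t1 - s) ^ 2)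
      (a' * R t1 ^ 2 - c ^ 2 * (2 * (t1 - t0) * -1)) t0 :=
    (hsq.mul_const _).sub (hdm2.const_mul _)
  have hSf : HasDerivAt (fun s => Real.sqrt (R s ^ 2 * R t1 ^ 2 - c ^ 2 * (t1 - s) ^ 2))
      ((a' * R t1 ^ 2 - c ^ 2 * (2 * (t1 - t0) * -1)) / (2 * S)) t0 :=
    hDf.sqrt (ne_of_gt hD)
  have hnum : HasDerivAt (fun s => R s ^ 2 + R t1 ^ 2
      + 2 * Real.sqrt (R s ^ 2 * R t1 ^ 2 - c ^ 2 * (t1 - s) ^ 2))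
      (a' + 2 * ((a' * R t1 ^ 2 - c ^ 2 * (2 * (t1 - t0) * -1)) / (2 * S))) t0 :=
    (hsq.add_const _).add (hSf.const_mul 2)
  have hQ : HasDerivAt (fun s => (R s ^ 2 + R t1 ^ 2
      + 2 * Real.sqrt (R s ^ 2 * R t1 ^ 2 - c ^ 2 * (t1 - s) ^ 2)) / (t1 - s) ^ 2)
      (((a' + 2 * ((a' * R t1 ^ 2 - c ^ 2 * (2 * (t1 - t0) * -1)) / (2 * S))) * (t1 - t0) ^ 2
        - (R t0 ^ 2 + R t1 ^ 2 + 2 * S) * (2 * (t1 - t0) * -1)) / ((t1 - t0) ^ 2) ^ 2) t0 :=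
    hnum.div hdm2 (pow_ne_zero 2 hΔ)
  have h12 : HasDerivAt (fun s => (1:ℝ) / 2 * (t1 - s)) (1 / 2 * -1) t0 := hdm.const_mul _
  have hP := h12.fun_mul hQ
  have hiu : HasDerivAt (fun s => c * (t1 - s)
      / Real.sqrt (R s ^ 2 * R t1 ^ 2 - c ^ 2 * (t1 - s) ^ 2))
      ((c * -1 * S - c * (t1 - t0) * ((a' * R t1 ^ 2 - c ^ 2 * (2 * (t1 - t0) * -1)) / (2 * S)))
        / S ^ 2) t0 :=
    (hdm.const_mul c).div hSf (ne_of_gt hSpos)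
  have harc := (hiu.arctan).const_mul c
  have htot := hP.fun_add harc
  have hfun : (fun s => hgen R c s t1) = (fun s =>
      (1:ℝ) / 2 * (t1 - s) * ((R s ^ 2 + R t1 ^ 2
        + 2 * Real.sqrt (R s ^ 2 * R t1 ^ 2 - c ^ 2 * (t1 - s) ^ 2)) / (t1 - s) ^ 2)
      + c * Real.arctan (c * (t1 - s)
          / Real.sqrt (R s ^ 2 * R t1 ^ 2 - c ^ 2 * (t1 - s) ^ 2))) := by
    funext s
    simp [hgen, Afun, Ssq]
  rw [hfun]
  refine htot.congr_deriv ?_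
  symm
  have hfold : Real.sqrt (R t0 ^ 2 * R t1 ^ 2 - c ^ 2 * (t1 - t0) ^ 2) = S := rfl
  rw [hfold]
  have h1x : 1 + (c * (t1 - t0) / S) ^ 2 = R t0 ^ 2 * R t1 ^ 2 / S ^ 2 := by
    field_simp
    linear_combination hS2
  rw [h1x]
  field_simp
  linear_combination (R t1 ^ 2 * (t1 - t0) * a' + 2 * (t1 - t0) ^ 2 * c ^ 2) * hS2

set_option maxHeartbeats 1000000 in
/-- Derivative in the second variable of the first partial derivative formula. -/
theorem GFT.hasDerivAt_d1_snd (R : ℝ → ℝ) (c t0 t1 : ℝ)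
    (hR1 : HasDerivAt R (deriv R t1) t1) (h1 : (0:ℝ) < t1 - t0)
    (hD : 0 < R t0 ^ 2 * R t1 ^ 2 - c ^ 2 * (t1 - t0) ^ 2) :
    HasDerivAt (fun t => (R t0 ^ 2 + R t ^ 2 + 2 * Ssq R c t0 t) / (2 * (t - t0) ^ 2)
        + (2 * R t0 * deriv R t0) * (R t0 ^ 2 + Ssq R c t0 t) / (2 * R t0 ^ 2 * (t - t0)))
      ((-(R t0 ^ 2 + R t1 ^ 2 + 2 * Ssq R c t0 t1)
        + (((t1 - t0) * (2 * R t1 * deriv R t1))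
            * (2 * R t0 ^ 2 + 2 * Ssq R c t0 t1 + (t1 - t0) * (2 * R t0 * deriv R t0))
              / (4 * Ssq R c t0 t1)
          - ((t1 - t0) * (2 * R t0 * deriv R t0)) * (R t0 ^ 2 + Ssq R c t0 t1)
              / (2 * R t0 ^ 2)
          - (c * (t1 - t0)) ^ 2 * (2 * R t0 ^ 2 + (t1 - t0) * (2 * R t0 * deriv R t0))
              / (2 * R t0 ^ 2 * Ssq R c t0 t1))) / (t1 - t0) ^ 3) t1 := by
  have hΔ : (t1 - t0) ≠ 0 := ne_of_gt h1
  have hSpos : 0 < Ssq R c t0 t1 := Real.sqrt_pos.mpr hD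
  have hS2 : Ssq R c t0 t1 ^ 2 = R t0 ^ 2 * R t1 ^ 2 - c ^ 2 * (t1 - t0) ^ 2 :=
    Real.sq_sqrt hD.le
  have hRt0 : R t0 ≠ 0 := by
    intro h; rw [h] at hD
    nlinarith [sq_nonneg (c * (t1 - t0)), sq_nonneg (R t1)]
  set S := Ssq R c t0 t1 with hSdef
  set a' := 2 * R t0 * deriv R t0 with ha'
  set b' := 2 * R t1 * deriv R t1 with hb'
  have hsqb : HasDerivAt (fun t => R t ^ 2) b' t1 := by
    simpa [hb', mul_comm] using hR1.fun_pow 2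
  have hdp : HasDerivAt (fun t => t - t0) 1 t1 := by
    simpa using (hasDerivAt_id t1).sub_const t0
  have hdp2 : HasDerivAt (fun t => (t - t0) ^ 2) (2 * (t1 - t0) * 1) t1 := by
    simpa using hdp.fun_pow 2
  have hDg : HasDerivAt (fun t => R t0 ^ 2 * R t ^ 2 - c ^ 2 * (t - t0) ^ 2)
      (R t0 ^ 2 * b' - c ^ 2 * (2 * (t1 - t0) * 1)) t1 :=
    ((hsqb.const_mul _).sub (hdp2.const_mul _))
  have hSg : HasDerivAt (fun t => Real.sqrt (R t0 ^ 2 * R t ^ 2 - c ^ 2 * (t - t0) ^ 2))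
      ((R t0 ^ 2 * b' - c ^ 2 * (2 * (t1 - t0) * 1)) / (2 * S)) t1 :=
    hDg.sqrt (ne_of_gt hD)
  have hnum1 : HasDerivAt (fun t => R t0 ^ 2 + R t ^ 2
      + 2 * Real.sqrt (R t0 ^ 2 * R t ^ 2 - c ^ 2 * (t - t0) ^ 2))
      (b' + 2 * ((R t0 ^ 2 * b' - c ^ 2 * (2 * (t1 - t0) * 1)) / (2 * S))) t1 :=
    (hsqb.const_add _).add (hSg.const_mul 2)
  have hden1 : HasDerivAt (fun t => 2 * (t - t0) ^ 2) (2 * (2 * (t1 - t0) * 1)) t1 :=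
    hdp2.const_mul 2
  have hfrac1 := hnum1.fun_div hden1 (by positivity : (2:ℝ) * (t1 - t0) ^ 2 ≠ 0)
  have hnum2 : HasDerivAt (fun t => a' * (R t0 ^ 2
      + Real.sqrt (R t0 ^ 2 * R t ^ 2 - c ^ 2 * (t - t0) ^ 2)))
      (a' * ((R t0 ^ 2 * b' - c ^ 2 * (2 * (t1 - t0) * 1)) / (2 * S))) t1 :=
    (hSg.const_add _).const_mul a'
  have hden2 : HasDerivAt (fun t => 2 * R t0 ^ 2 * (t - t0)) (2 * R t0 ^ 2 * 1) t1 :=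
    hdp.const_mul _
  have hfrac2 := hnum2.fun_div hden2 (by
    simp only [ne_eq, mul_eq_zero]
    push_neg
    exact ⟨⟨two_ne_zero, pow_ne_zero 2 hRt0⟩, hΔ⟩)
  have htot := hfrac1.fun_add hfrac2
  have hfun : (fun t => (R t0 ^ 2 + R t ^ 2 + 2 * Ssq R c t0 t) / (2 * (t - t0) ^ 2)
      + (2 * R t0 * deriv R t0) * (R t0 ^ 2 + Ssq R c t0 t) / (2 * R t0 ^ 2 * (t - t0)))
      = (fun t => (R t0 ^ 2 + R t ^ 2
        + 2 * Real.sqrt (R t0 ^ 2 * R t ^ 2 - c ^ 2 * (t - t0) ^ 2)) / (2 * (t - t0) ^ 2)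
      + a' * (R t0 ^ 2 + Real.sqrt (R t0 ^ 2 * R t ^ 2 - c ^ 2 * (t - t0) ^ 2))
          / (2 * R t0 ^ 2 * (t - t0))) := by
    funext t
    simp [Ssq, ha']
  rw [hfun]
  refine htot.congr_deriv ?_
  symm
  have hfold : Real.sqrt (R t0 ^ 2 * R t1 ^ 2 - c ^ 2 * (t1 - t0) ^ 2) = S := rfl
  rw [hfold]
  field_simp
  ring

set_option maxHeartbeats 2000000 in
/-- For `c ∈ (0, ε R_min²/σ)` the generating function `h` is `C²` on the
strip `Ω = {0 < t1 − t0 < σ}`, is invariant under the translation `(t0,t1) ↦ (t0+1,t1+1)`,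
its mixed partial derivative `∂²h/∂t0∂t1` is negative on `Ω`, and
`∂²h/∂t0∂t1 → −∞` as `t1 − t0 → 0⁺`. -/
theorem generating_function_twist (R : ℝ → ℝ) (ε c : ℝ)
    (hC : ContDiff ℝ 2 R) (hper : ∀ t, R (t + 1) = R t) (hpos : ∀ t, 0 < R t)
    (hnc : ∃ a b, R a ≠ R b)
    (hε : ε ∈ Set.Ioo (0 : ℝ) 1) (hσ : 0 < sigmaR R ε)
    (hc : c ∈ Set.Ioo 0 (ε * Rmin R ^ 2 / sigmaR R ε)) :
    ContDiffOn ℝ 2 (fun p : ℝ × ℝ => hgen R c p.1 p.2)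
      {p : ℝ × ℝ | 0 < p.2 - p.1 ∧ p.2 - p.1 < sigmaR R ε} ∧
    (∀ s u : ℝ, 0 < u - s → u - s < sigmaR R ε →
        hgen R c (s + 1) (u + 1) = hgen R c s u) ∧
    (∀ s u : ℝ, 0 < u - s → u - s < sigmaR R ε → d12h R c s u < 0) ∧
    (∀ M : ℝ, ∃ δ > 0, ∀ s u : ℝ, 0 < u - s → u - s < δ → d12h R c s u < M) := by
  obtain ⟨hε0, hε1⟩ := hε
  obtain ⟨hc0, hcu⟩ := hc
  have hcont : Continuous R := hC.continuous
  have hperF : Function.Periodic R 1 := hper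
  obtain ⟨hmle, hm⟩ := GFT.per_inf_le hcont hperF hpos
  have hmle : ∀ t, Rmin R ≤ R t := hmle
  have hm : 0 < Rmin R := hm
  have hdcont : Continuous (deriv R) := hC.continuous_deriv one_le_two
  have hdper : Function.Periodic (deriv R) 1 := by
    intro t
    have h : (fun s => R (s + 1)) = R := by funext s; exact hper s
    have h2 := deriv_comp_add_const R 1 t
    rw [h] at h2
    exact h2.symm
  have hNb : ∀ t, |deriv R t| ≤ supNorm (deriv R) := GFT.per_abs_le hdcont hdper
  have hN0 : 0 ≤ supNorm (deriv R) := le_trans (abs_nonneg _) (hNb 0)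
  have hσ1 : sigmaR R ε ≤ Rmin R / (2 * supNorm (deriv R)) := min_le_left _ _
  have hNΔ : ∀ Δ : ℝ, 0 < Δ → Δ ≤ sigmaR R ε → 2 * supNorm (deriv R) * Δ ≤ Rmin R := by
    intro Δ hΔ0 hΔσ
    rcases eq_or_lt_of_le hN0 with h0 | h0
    · rw [← h0]
      simpa using hm.le
    · have hd : Δ ≤ Rmin R / (2 * supNorm (deriv R)) := le_trans hΔσ hσ1
      rw [le_div_iff₀ (by positivity)] at hd
      linarith
  have hcσ : c * sigmaR R ε < ε * Rmin R ^ 2 := (lt_div_iff₀ hσ).mp hcu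
  have hwlt : ∀ Δ : ℝ, 0 < Δ → Δ < sigmaR R ε → c * Δ < Rmin R ^ 2 := by
    intro Δ h0 hΔ
    have h1 : c * Δ < c * sigmaR R ε := mul_lt_mul_of_pos_left hΔ hc0
    nlinarith [sq_nonneg (Rmin R)]
  have hDpos : ∀ s u : ℝ, 0 < u - s → u - s < sigmaR R ε →
      0 < R s ^ 2 * R u ^ 2 - c ^ 2 * (u - s) ^ 2 := by
    intro s u h0 hσu
    have h1 : c * (u - s) < Rmin R ^ 2 := hwlt _ h0 hσu
    have h2 : Rmin R ^ 2 ≤ R s * R u := by nlinarith [hmle s, hmle u, hpos s, hpos u]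
    have h3 : 0 ≤ c * (u - s) := by positivity
    nlinarith [hpos s, hpos u]
  have hdiffR : ∀ t, HasDerivAt R (deriv R t) t :=
    fun t => ((hC.differentiable (by norm_num)) t).hasDerivAt
  -- main quantitative bound
  have hmain : ∀ s u : ℝ, 0 < u - s → u - s < sigmaR R ε →
      d12h R c s u ≤ -(Rmin R ^ 2 / 2) / (u - s) ^ 3 := by
    intro s u h0 hσu
    have hD := hDpos s u h0 hσu
    have hSpos : 0 < Ssq R c s u := Real.sqrt_pos.mpr hD
    have hS2 : Ssq R c s u ^ 2 = R s ^ 2 * R u ^ 2 - c ^ 2 * (u - s) ^ 2 := Real.sq_sqrt hD.le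
    -- identify d12h with the explicit formula
    have hnhds : (fun t => d1h R c s t) =ᶠ[nhds u] (fun t =>
        (R s ^ 2 + R t ^ 2 + 2 * Ssq R c s t) / (2 * (t - s) ^ 2)
          + (2 * R s * deriv R s) * (R s ^ 2 + Ssq R c s t) / (2 * R s ^ 2 * (t - s))) := by
      have hmem : Set.Ioo s (s + sigmaR R ε) ∈ nhds u :=
        Ioo_mem_nhds (by linarith) (by linarith)
      filter_upwards [hmem] with t ht
      have ht0 : 0 < t - s := by linarith [ht.1]
      have htσ : t - s < sigmaR R ε := by linarith [ht.2]
      exact (GFT.hasDerivAt_hgen_fst R c s t (hdiffR s) ht0 (hDpos s t ht0 htσ)).deriv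
    have hder := GFT.hasDerivAt_d1_snd R c s u (hdiffR u) h0 hD
    have hd12 : d12h R c s u = (-(R s ^ 2 + R u ^ 2 + 2 * Ssq R c s u)
        + (((u - s) * (2 * R u * deriv R u))
            * (2 * R s ^ 2 + 2 * Ssq R c s u + (u - s) * (2 * R s * deriv R s))
              / (4 * Ssq R c s u)
          - ((u - s) * (2 * R s * deriv R s)) * (R s ^ 2 + Ssq R c s u) / (2 * R s ^ 2)
          - (c * (u - s)) ^ 2 * (2 * R s ^ 2 + (u - s) * (2 * R s * deriv R s))
              / (2 * R s ^ 2 * Ssq R c s u))) / (u - s) ^ 3 := by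
      rw [d12h, hnhds.deriv_eq, hder.deriv]
    rw [hd12]
    -- abbreviations
    set S := Ssq R c s u with hSd
    set uu := (u - s) * (2 * R s * deriv R s) with huud
    set vv := (u - s) * (2 * R u * deriv R u) with hvvd
    set ww := c * (u - s) with hwwd
    have hRs : R s ≠ 0 := ne_of_gt (hpos s)
    -- bounds on uu, vv
    have hboundu : ∀ t : ℝ, |(u - s) * (2 * R t * deriv R t)| ≤ Rmin R * R t := by
      intro t
      have hd1 : deriv R t ≤ supNorm (deriv R) := le_trans (le_abs_self _) (hNb t)
      have hd2 : -(supNorm (deriv R)) ≤ deriv R t := by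
        have := neg_abs_le (deriv R t)
        have h3 := hNb t
        linarith
      have h2 := hNΔ (u - s) h0 hσu.le
      rw [abs_le]
      constructor
      · nlinarith [mul_le_mul_of_nonneg_left hd2
          (mul_nonneg h0.le (by linarith [hpos t]) : (0:ℝ) ≤ (u - s) * (2 * R t)),
          mul_le_mul_of_nonneg_right h2 (hpos t).le]
      · nlinarith [mul_le_mul_of_nonneg_left hd1
          (mul_nonneg h0.le (by linarith [hpos t]) : (0:ℝ) ≤ (u - s) * (2 * R t)),
          mul_le_mul_of_nonneg_right h2 (hpos t).le]
    have hu : |uu| ≤ Rmin R * R s := by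
      rw [huud]
      exact hboundu s
    have hv : |vv| ≤ Rmin R * R u := by
      rw [hvvd]
      exact hboundu u
    have hSeq : S ^ 2 = R s ^ 2 * R u ^ 2 - ww ^ 2 := by
      rw [hwwd, hS2]
      ring
    have hkey := GFT.keyIneq (Rmin R) (R s) (R u) uu vv ww S hm (hmle s) (hmle u) hu hv hSeq hSpos
    -- conclude
    have hXeq : vv * (2 * R s ^ 2 + 2 * S + uu) / (4 * S)
        - uu * (R s ^ 2 + S) / (2 * R s ^ 2)
        - ww ^ 2 * (2 * R s ^ 2 + uu) / (2 * R s ^ 2 * S)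
        = (R s ^ 2 * vv * (2 * R s ^ 2 + 2 * S + uu) - 2 * uu * S * (R s ^ 2 + S)
            - 2 * ww ^ 2 * (2 * R s ^ 2 + uu)) / (4 * R s ^ 2 * S) := by
      field_simp
      ring
    have hX : vv * (2 * R s ^ 2 + 2 * S + uu) / (4 * S)
        - uu * (R s ^ 2 + S) / (2 * R s ^ 2)
        - ww ^ 2 * (2 * R s ^ 2 + uu) / (2 * R s ^ 2 * S)
        ≤ 3 / 4 * (R s ^ 2 + R u ^ 2 + 2 * S) := by
      rw [hXeq, div_le_iff₀ (by positivity : (0:ℝ) < 4 * R s ^ 2 * S)]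
      nlinarith [hkey]
    have hnum : -(R s ^ 2 + R u ^ 2 + 2 * S)
        + (vv * (2 * R s ^ 2 + 2 * S + uu) / (4 * S)
          - uu * (R s ^ 2 + S) / (2 * R s ^ 2)
          - ww ^ 2 * (2 * R s ^ 2 + uu) / (2 * R s ^ 2 * S))
        ≤ -(Rmin R ^ 2 / 2) := by
      have hab : 2 * Rmin R ^ 2 ≤ R s ^ 2 + R u ^ 2 := by
        nlinarith [hmle s, hmle u, hm]
      nlinarith [hX, hSpos]
    exact (div_le_div_iff_of_pos_right (by positivity : (0:ℝ) < (u - s) ^ 3)).mpr hnum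
  refine ⟨?_, ?_, ?_, ?_⟩
  · -- C^2 smoothness on the strip
    intro p hp
    obtain ⟨hp1, hp2⟩ := hp
    have hDp : 0 < R p.1 ^ 2 * R p.2 ^ 2 - c ^ 2 * (p.2 - p.1) ^ 2 := hDpos p.1 p.2 hp1 hp2
    have hdp : p.2 - p.1 ≠ 0 := ne_of_gt hp1
    have hSp : Real.sqrt (R p.1 ^ 2 * R p.2 ^ 2 - c ^ 2 * (p.2 - p.1) ^ 2) ≠ 0 :=
      ne_of_gt (Real.sqrt_pos.mpr hDp)
    have h1 : ContDiffAt ℝ 2 (fun q : ℝ × ℝ => R q.1) p := (hC.comp contDiff_fst).contDiffAt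
    have h2 : ContDiffAt ℝ 2 (fun q : ℝ × ℝ => R q.2) p := (hC.comp contDiff_snd).contDiffAt
    have hsub : ContDiffAt ℝ 2 (fun q : ℝ × ℝ => q.2 - q.1) p :=
      (contDiff_snd.sub contDiff_fst).contDiffAt
    have hDq : ContDiffAt ℝ 2
        (fun q : ℝ × ℝ => R q.1 ^ 2 * R q.2 ^ 2 - c ^ 2 * (q.2 - q.1) ^ 2) p :=
      ((h1.pow 2).mul (h2.pow 2)).sub (contDiffAt_const.mul (hsub.pow 2))
    have hsqrt : ContDiffAt ℝ 2
        (fun q : ℝ × ℝ => Real.sqrt (R q.1 ^ 2 * R q.2 ^ 2 - c ^ 2 * (q.2 - q.1) ^ 2)) p :=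
      hDq.sqrt (ne_of_gt hDp)
    have hnumq : ContDiffAt ℝ 2 (fun q : ℝ × ℝ => R q.1 ^ 2 + R q.2 ^ 2
        + 2 * Real.sqrt (R q.1 ^ 2 * R q.2 ^ 2 - c ^ 2 * (q.2 - q.1) ^ 2)) p :=
      ((h1.pow 2).add (h2.pow 2)).add (contDiffAt_const.mul hsqrt)
    have hfrac : ContDiffAt ℝ 2 (fun q : ℝ × ℝ => (R q.1 ^ 2 + R q.2 ^ 2
        + 2 * Real.sqrt (R q.1 ^ 2 * R q.2 ^ 2 - c ^ 2 * (q.2 - q.1) ^ 2))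
          / (q.2 - q.1) ^ 2) p :=
      hnumq.div (hsub.pow 2) (pow_ne_zero 2 hdp)
    have hpart1 : ContDiffAt ℝ 2 (fun q : ℝ × ℝ => (1:ℝ) / 2 * (q.2 - q.1)
        * ((R q.1 ^ 2 + R q.2 ^ 2
          + 2 * Real.sqrt (R q.1 ^ 2 * R q.2 ^ 2 - c ^ 2 * (q.2 - q.1) ^ 2))
            / (q.2 - q.1) ^ 2)) p :=
      (contDiffAt_const.mul hsub).mul hfrac
    have hinner : ContDiffAt ℝ 2 (fun q : ℝ × ℝ => c * (q.2 - q.1)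
        / Real.sqrt (R q.1 ^ 2 * R q.2 ^ 2 - c ^ 2 * (q.2 - q.1) ^ 2)) p :=
      (contDiffAt_const.mul hsub).div hsqrt hSp
    have harctan : ContDiffAt ℝ 2 (fun q : ℝ × ℝ => Real.arctan (c * (q.2 - q.1)
        / Real.sqrt (R q.1 ^ 2 * R q.2 ^ 2 - c ^ 2 * (q.2 - q.1) ^ 2))) p :=
      ((Real.contDiff_arctan.of_le le_top).contDiffAt).comp p hinner
    have htotal := hpart1.add (contDiffAt_const (c := c) |>.mul harctan)
    have hfun : (fun p : ℝ × ℝ => hgen R c p.1 p.2) = (fun q : ℝ × ℝ =>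
        (1:ℝ) / 2 * (q.2 - q.1) * ((R q.1 ^ 2 + R q.2 ^ 2
          + 2 * Real.sqrt (R q.1 ^ 2 * R q.2 ^ 2 - c ^ 2 * (q.2 - q.1) ^ 2))
            / (q.2 - q.1) ^ 2)
        + c * Real.arctan (c * (q.2 - q.1)
            / Real.sqrt (R q.1 ^ 2 * R q.2 ^ 2 - c ^ 2 * (q.2 - q.1) ^ 2))) := by
      funext q
      simp [hgen, Afun, Ssq]
    rw [hfun]
    exact htotal.contDiffWithinAt
  · -- periodicity
    intro s u h0 hσu
    have h1 : u + 1 - (s + 1) = u - s := by ring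
    simp only [hgen, Afun, Ssq, hper, h1]
  · -- negativity of the twist
    intro s u h0 hσu
    have hb := hmain s u h0 hσu
    have hpos3 : 0 < Rmin R ^ 2 / 2 / (u - s) ^ 3 := by positivity
    have : -(Rmin R ^ 2 / 2) / (u - s) ^ 3 = -(Rmin R ^ 2 / 2 / (u - s) ^ 3) := by ring
    rw [this] at hb
    linarith
  · -- blow-up of the twist
    intro M
    refine ⟨min (sigmaR R ε) (min 1 (Rmin R ^ 2 / (2 * (|M| + 1)))), ?_, ?_⟩
    · have : 0 < Rmin R ^ 2 / (2 * (|M| + 1)) := by positivity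
      positivity
    · intro s u h0 hδ
      have hδ1 : u - s < sigmaR R ε := lt_of_lt_of_le hδ (min_le_left _ _)
      have hδ2 : u - s < 1 := lt_of_lt_of_le hδ (le_trans (min_le_right _ _) (min_le_left _ _))
      have hδ3 : u - s < Rmin R ^ 2 / (2 * (|M| + 1)) :=
        lt_of_lt_of_le hδ (le_trans (min_le_right _ _) (min_le_right _ _))
      have hb := hmain s u h0 hδ1
      have hcube : (u - s) ^ 3 < Rmin R ^ 2 / (2 * (|M| + 1)) := by
        have h3 : (u - s) ^ 3 < u - s := by
          nlinarith [mul_pos (mul_pos h0 (by linarith : (0:ℝ) < 1 - (u - s)))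
            (by linarith : (0:ℝ) < 1 + (u - s))]
        linarith
      have habs : (|M| + 1) * (u - s) ^ 3 < Rmin R ^ 2 / 2 := by
        rw [lt_div_iff₀ (by positivity : (0:ℝ) < 2 * (|M| + 1))] at hcube
        nlinarith [abs_nonneg M]
      have hlt : -(Rmin R ^ 2 / 2) / (u - s) ^ 3 < -(|M| + 1) := by
        rw [div_lt_iff₀ (by positivity : (0:ℝ) < (u - s) ^ 3)]
        nlinarith
      have : -(|M| + 1) < M := by
        have := neg_abs_le M
        linarith
      linarith
end
end

section
/- Let c > 0 and t0 < t1 with c(t1−t0) < R(t0)R(t1). Then the partial derivative of the generating function h with respect to its first argument is ∂h/∂t0 (t0,t1) = c²/(2R(t0)²) + ½u² + R'(t0)·u, where u := (R(t0)² + √(R(t0)²R(t1)² − c²(t1−t0)²)) / (R(t0)·(t1−t0)). -/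
noncomputable section

set_option maxHeartbeats 4000000 in
/-- For `c > 0` and `t0 < t1` with `c(t1−t0) < R(t0)R(t1)`, the partial
derivative of the generating function `h` in its first argument is
`∂₁h(t0,t1) = c²/(2R(t0)²) + ½u² + R'(t0)·u`, with
`u = (R(t0)² + √(R(t0)²R(t1)² − c²(t1−t0)²))/(R(t0)(t1−t0))`. -/
theorem d1h_formula (R : ℝ → ℝ) (c t0 t1 : ℝ)
    (hC : ContDiff ℝ 2 R) (hper : ∀ t, R (t + 1) = R t) (hpos : ∀ t, 0 < R t)
    (hnc : ∃ a b, R a ≠ R b)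
    (hc : 0 < c) (ht : t0 < t1) (hlt : c * (t1 - t0) < R t0 * R t1) :
    d1h R c t0 t1 =
      c ^ 2 / (2 * R t0 ^ 2) +
        (1 / 2) * ((R t0 ^ 2 + Ssq R c t0 t1) / (R t0 * (t1 - t0))) ^ 2 +
        deriv R t0 * ((R t0 ^ 2 + Ssq R c t0 t1) / (R t0 * (t1 - t0))) := by

  have hτ : (0:ℝ) < t1 - t0 := sub_pos.mpr ht
  have hR0 : 0 < R t0 := hpos t0
  have hR1 : 0 < R t1 := hpos t1
  have hP : 0 < R t0 ^ 2 * R t1 ^ 2 - c ^ 2 * (t1 - t0) ^ 2 := by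
    nlinarith [mul_pos hc hτ, mul_pos hR0 hR1]
  have hSpos : 0 < Ssq R c t0 t1 := Real.sqrt_pos.mpr hP
  have hS2 : Ssq R c t0 t1 ^ 2 = R t0 ^ 2 * R t1 ^ 2 - c ^ 2 * (t1 - t0) ^ 2 :=
    Real.sq_sqrt hP.le
  set r' := deriv R t0 with hr'
  have hR' : HasDerivAt R r' t0 :=
    ((hC.differentiable (by norm_num)) t0).hasDerivAt
  have h1 : HasDerivAt (fun s => R s ^ 2) (2 * R t0 * r') t0 := by
    simpa [mul_comm, mul_assoc, mul_left_comm, Pi.pow_def] using hR'.pow 2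
  have h2 : HasDerivAt (fun s => t1 - s) (-1) t0 := by
    simpa using (hasDerivAt_id t0).const_sub t1
  have h3 : HasDerivAt (fun s => (t1 - s) ^ 2) (-(2 * (t1 - t0))) t0 := by
    have := h2.pow 2
    simpa [mul_comm, mul_assoc, mul_left_comm, Pi.pow_def] using this
  have hPd : HasDerivAt (fun s => R s ^ 2 * R t1 ^ 2 - c ^ 2 * (t1 - s) ^ 2)
      (2 * R t0 * r' * R t1 ^ 2 - c ^ 2 * -(2 * (t1 - t0))) t0 :=
    (h1.mul_const _).sub (h3.const_mul (c ^ 2))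
  set S' := (2 * R t0 * r' * R t1 ^ 2 + c ^ 2 * (2 * (t1 - t0))) / (2 * Ssq R c t0 t1)
    with hS'def
  have hS : HasDerivAt (fun s => Ssq R c s t1) S' t0 := by
    have := hPd.sqrt hP.ne'
    simpa [Ssq, hS'def] using this
  have hN : HasDerivAt (fun s => R s ^ 2 + R t1 ^ 2 + 2 * Ssq R c s t1)
      (2 * R t0 * r' + 2 * S') t0 := by
    simpa [Pi.add_def] using (h1.add_const (R t1 ^ 2)).add (hS.const_mul 2)
  set A' := ((2 * R t0 * r' + 2 * S') * (t1 - t0) ^ 2 +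
      (R t0 ^ 2 + R t1 ^ 2 + 2 * Ssq R c t0 t1) * (2 * (t1 - t0))) / ((t1 - t0) ^ 2) ^ 2
    with hA'def
  have hτ2ne : (t1 - t0) ^ 2 ≠ 0 := pow_ne_zero 2 hτ.ne'
  have hA : HasDerivAt (fun s => Afun R c s t1) A' t0 := by
    have := hN.div h3 hτ2ne
    simpa [Afun, Pi.div_def] using this
  have hhalf : HasDerivAt (fun s => (1 / 2 : ℝ) * (t1 - s)) (1 / 2 * -1) t0 :=
    h2.const_mul (1 / 2)
  have hF : HasDerivAt (fun s => (1 / 2 : ℝ) * (t1 - s) * Afun R c s t1)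
      (1 / 2 * -1 * Afun R c t0 t1 + 1 / 2 * (t1 - t0) * A') t0 := hhalf.mul hA
  set Arg' := (c * -1 * Ssq R c t0 t1 - c * (t1 - t0) * S') / Ssq R c t0 t1 ^ 2
    with hArg'def
  have hArg : HasDerivAt (fun s => c * (t1 - s) / Ssq R c s t1) Arg' t0 :=
    (h2.const_mul c).div hS hSpos.ne'
  have hG : HasDerivAt (fun s => c * Real.arctan (c * (t1 - s) / Ssq R c s t1))
      (c * (1 / (1 + (c * (t1 - t0) / Ssq R c t0 t1) ^ 2) * Arg')) t0 :=
    hArg.arctan.const_mul c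
  have hTot : HasDerivAt (fun s => hgen R c s t1)
      (1 / 2 * -1 * Afun R c t0 t1 + 1 / 2 * (t1 - t0) * A' +
        c * (1 / (1 + (c * (t1 - t0) / Ssq R c t0 t1) ^ 2) * Arg')) t0 := by
    have := hF.add hG
    simpa [hgen, Pi.add_def] using this
  rw [d1h, hTot.deriv]
  have harg_pos : (0:ℝ) < 1 + (c * (t1 - t0) / Ssq R c t0 t1) ^ 2 := by positivity
  have hb : R t1 ^ 2 = (Ssq R c t0 t1 ^ 2 + c ^ 2 * (t1 - t0) ^ 2) / R t0 ^ 2 := by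
    rw [hS2]; field_simp; ring
  rw [hA'def, hArg'def, hS'def, Afun, hb]
  field_simp [hR0.ne', hSpos.ne', hτ.ne', harg_pos.ne']
  ring
end
end

section
/- Fix ε ∈ (0,1) and c ∈ (0, ε·R_min²/σ), and let t0 < t1 with 0 < t1 − t0 < σ. Set u := (R(t0)² + √(R(t0)²R(t1)² − c²(t1−t0)²))/(R(t0)·(t1−t0)). Then R'(t0)² + 2∂₁h(t0,t1) − c²/R(t0)² = (R'(t0) + u)², the quantity R'(t0) + u is strictly positive, and consequently R'(t0) − √( R'(t0)² + 2∂₁h(t0,t1) − c²/R(t0)² ) = −u. -/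
noncomputable section

lemma alg_aux (a a' b c τ S : ℝ) (ha : 0 < a) (hb : 0 < b) (hτ : 0 < τ) (hS : 0 < S)
    (hS2 : S ^ 2 = a ^ 2 * b ^ 2 - c ^ 2 * τ ^ 2) :
    ((2 * a ^ 1 * a' + 2 * (1 / (2 * S) * (2 * a * a' * b ^ 2 + 2 * c ^ 2 * τ))) * (2 * τ) -
        (a ^ 2 + b ^ 2 + 2 * S) * (2 * -1)) / (2 * τ) ^ 2 +
      c * (1 / (1 + (c * τ / S) ^ 2) *
        ((c * -1 * S - c * τ * (1 / (2 * S) * (2 * a * a' * b ^ 2 + 2 * c ^ 2 * τ))) / S ^ 2)) =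
    a' * ((a ^ 2 + S) / (a * τ)) + (((a ^ 2 + S) / (a * τ)) ^ 2 + c ^ 2 / a ^ 2) / 2 := by
  have hone : 1 + (c * τ / S) ^ 2 = a ^ 2 * b ^ 2 / S ^ 2 := by
    field_simp
    linear_combination hS2
  rw [hone]
  field_simp
  linear_combination (-(2*a*a'*b^2*τ + b^2*S + 2*c^2*τ^2)) * hS2

/-- For `c ∈ (0, ε R_min²/σ)` and `0 < t1 − t0 < σ`, with
`u = (R(t0)² + √(R(t0)²R(t1)² − c²(t1−t0)²))/(R(t0)(t1−t0))` one has
`R'(t0)² + 2∂₁h(t0,t1) − c²/R(t0)² = (R'(t0) + u)²`, the quantity `R'(t0) + u` is strictly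
positive, and consequently `R'(t0) − √(R'(t0)² + 2∂₁h(t0,t1) − c²/R(t0)²) = −u`. -/
theorem post_impact_velocity_root (R : ℝ → ℝ) (ε c t0 t1 : ℝ)
    (hC : ContDiff ℝ 2 R) (hper : ∀ t, R (t + 1) = R t) (hpos : ∀ t, 0 < R t)
    (hnc : ∃ a b, R a ≠ R b)
    (hε : ε ∈ Set.Ioo (0 : ℝ) 1) (hσ : 0 < sigmaR R ε)
    (hc : c ∈ Set.Ioo 0 (ε * Rmin R ^ 2 / sigmaR R ε))
    (h1 : 0 < t1 - t0) (h2 : t1 - t0 < sigmaR R ε) :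
    deriv R t0 ^ 2 + 2 * d1h R c t0 t1 - c ^ 2 / R t0 ^ 2 =
      (deriv R t0 + (R t0 ^ 2 + Ssq R c t0 t1) / (R t0 * (t1 - t0))) ^ 2 ∧
    0 < deriv R t0 + (R t0 ^ 2 + Ssq R c t0 t1) / (R t0 * (t1 - t0)) ∧
    deriv R t0 - Real.sqrt (deriv R t0 ^ 2 + 2 * d1h R c t0 t1 - c ^ 2 / R t0 ^ 2) =
      -((R t0 ^ 2 + Ssq R c t0 t1) / (R t0 * (t1 - t0))) := by
  obtain ⟨hc0, hc1⟩ := hc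
  obtain ⟨hε0, hε1⟩ := hε
  have ha : 0 < R t0 := hpos t0
  have hb : 0 < R t1 := hpos t1
  -- basic Rmin facts
  have hrange : (Set.range R).Nonempty := ⟨R 0, 0, rfl⟩
  have hbddR : BddBelow (Set.range R) := ⟨0, by rintro y ⟨t, rfl⟩; exact (hpos t).le⟩
  have hRmin_le : ∀ t, Rmin R ≤ R t := fun t => csInf_le hbddR ⟨t, rfl⟩
  have hRmin0 : 0 ≤ Rmin R := le_csInf hrange (by rintro y ⟨t, rfl⟩; exact (hpos t).le)
  -- deriv bound
  have hRper : Function.Periodic R 1 := hper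
  have hd_cont : Continuous (deriv R) := hC.continuous_deriv (by norm_num)
  have hd_per : Function.Periodic (fun t => |deriv R t|) 1 := fun t => by
    have : deriv R (t + 1) = deriv R t := by
      conv_rhs => rw [show R = fun s => R (s + 1) from funext fun s => (hper s).symm]
      rw [deriv_comp_add_const]
    simp [this]
  have hbddA : BddAbove (Set.range fun t => |deriv R t|) := by
    rw [← hd_per.image_Icc one_pos 0]
    exact (isCompact_Icc.image hd_cont.abs).bddAbove
  have hNle : ∀ t, |deriv R t| ≤ supNorm (deriv R) := fun t => le_csSup hbddA ⟨t, rfl⟩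
  have hσ1 : sigmaR R ε ≤ Rmin R / (2 * supNorm (deriv R)) := min_le_left _ _
  have hN0 : 0 < supNorm (deriv R) := by
    by_contra h
    push_neg at h
    have : Rmin R / (2 * supNorm (deriv R)) ≤ 0 :=
      div_nonpos_iff.2 (Or.inl ⟨hRmin0, by linarith⟩)
    linarith
  -- k > 0
  have hcσ : c * sigmaR R ε < ε * Rmin R ^ 2 := (lt_div_iff₀ hσ).1 hc1
  have hcτ : c * (t1 - t0) < R t0 * R t1 := by
    have h3 : c * (t1 - t0) < c * sigmaR R ε := by nlinarith
    nlinarith [hRmin_le t0, hRmin_le t1, mul_pos ha hb]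
  have hk : 0 < R t0 ^ 2 * R t1 ^ 2 - c ^ 2 * (t1 - t0) ^ 2 := by
    nlinarith [mul_pos hc0 h1, mul_pos ha hb]
  set a' := deriv R t0 with ha'def
  set S := Real.sqrt (R t0 ^ 2 * R t1 ^ 2 - c ^ 2 * (t1 - t0) ^ 2) with hSdef
  have hSsq : Ssq R c t0 t1 = S := rfl
  rw [hSsq]
  have hS : 0 < S := Real.sqrt_pos.2 hk
  have hS2 : S ^ 2 = R t0 ^ 2 * R t1 ^ 2 - c ^ 2 * (t1 - t0) ^ 2 := Real.sq_sqrt hk.le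
  -- derivative computation
  set q : ℝ → ℝ := fun s => R s ^ 2 * R t1 ^ 2 - c ^ 2 * (t1 - s) ^ 2 with hqdef
  have hqt0 : q t0 = R t0 ^ 2 * R t1 ^ 2 - c ^ 2 * (t1 - t0) ^ 2 := rfl
  have hsq : Real.sqrt (q t0) = S := by rw [hqt0]
  have hRd : HasDerivAt R a' t0 := ((hC.differentiable (by norm_num)) t0).hasDerivAt
  have hq : HasDerivAt q (2 * R t0 * a' * R t1 ^ 2 + 2 * c ^ 2 * (t1 - t0)) t0 := by
    have h1' : HasDerivAt (fun s => R s ^ 2 * R t1 ^ 2) ((2 * R t0 ^ 1 * a') * R t1 ^ 2) t0 :=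
      (hRd.pow 2).mul_const _
    have h2' : HasDerivAt (fun s => c ^ 2 * (t1 - s) ^ 2)
        (c ^ 2 * (2 * (t1 - t0) ^ 1 * (-1))) t0 :=
      (((hasDerivAt_id t0).const_sub t1).pow 2).const_mul _
    have := h1'.sub h2'
    exact this.congr_deriv (by ring)
  have hSd : HasDerivAt (fun s => Real.sqrt (q s))
      (1 / (2 * S) * (2 * R t0 * a' * R t1 ^ 2 + 2 * c ^ 2 * (t1 - t0))) t0 := by
    have := (Real.hasDerivAt_sqrt (x := q t0) (by rw [hqt0]; exact hk.ne')).comp t0 hq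
    rwa [hsq] at this
  have hNum : HasDerivAt (fun s => R s ^ 2 + R t1 ^ 2 + 2 * Real.sqrt (q s))
      ((2 * R t0 ^ 1 * a') +
        2 * (1 / (2 * S) * (2 * R t0 * a' * R t1 ^ 2 + 2 * c ^ 2 * (t1 - t0)))) t0 :=
    ((hRd.pow 2).add_const _).add (hSd.const_mul 2)
  have hDen : HasDerivAt (fun s => 2 * (t1 - s)) (2 * (-1)) t0 :=
    ((hasDerivAt_id t0).const_sub t1).const_mul 2
  have hQuot := hNum.div hDen (by positivity : (2:ℝ) * (t1 - t0) ≠ 0)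
  have hArg : HasDerivAt (fun s => c * (t1 - s) / Real.sqrt (q s))
      ((c * (-1) * S - c * (t1 - t0) *
        (1 / (2 * S) * (2 * R t0 * a' * R t1 ^ 2 + 2 * c ^ 2 * (t1 - t0)))) / S ^ 2) t0 := by
    have := (((hasDerivAt_id t0).const_sub t1).const_mul c).div hSd
      (by rw [hsq]; exact hS.ne')
    rwa [hsq] at this
  have hAt : HasDerivAt (fun s => c * Real.arctan (c * (t1 - s) / Real.sqrt (q s)))
      (c * (1 / (1 + (c * (t1 - t0) / S) ^ 2) *
        ((c * (-1) * S - c * (t1 - t0) *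
          (1 / (2 * S) * (2 * R t0 * a' * R t1 ^ 2 + 2 * c ^ 2 * (t1 - t0)))) / S ^ 2))) t0 := by
    have h0 : HasDerivAt Real.arctan (1 / (1 + (c * (t1 - t0) / S) ^ 2))
        ((fun s => c * (t1 - s) / Real.sqrt (q s)) t0) := by
      simp only [hsq]
      exact Real.hasDerivAt_arctan _
    exact (h0.comp t0 hArg).const_mul c
  have hF := hQuot.add hAt
  rw [hsq] at hF
  have hev : (fun s => hgen R c s t1) =ᶠ[nhds t0]
      (fun y => (R y ^ 2 + R t1 ^ 2 + 2 * Real.sqrt (q y)) / (2 * (t1 - y)) +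
        c * Real.arctan (c * (t1 - y) / Real.sqrt (q y))) := by
    filter_upwards [Iio_mem_nhds (show t0 < t1 by linarith)] with s hs
    have hne : t1 - s ≠ 0 := by simp only [Set.mem_Iio] at hs; intro h; linarith
    simp only [hgen, Afun, Ssq, hqdef]
    field_simp
  have hd1 : d1h R c t0 t1 =
      a' * ((R t0 ^ 2 + S) / (R t0 * (t1 - t0))) +
        (((R t0 ^ 2 + S) / (R t0 * (t1 - t0))) ^ 2 + c ^ 2 / R t0 ^ 2) / 2 := by
    rw [d1h, hev.deriv_eq]
    exact hF.deriv.trans (alg_aux (R t0) a' (R t1) c (t1 - t0) S ha hb h1 hS hS2)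
  -- positivity of a' + u
  have hu : R t0 / (t1 - t0) < (R t0 ^ 2 + S) / (R t0 * (t1 - t0)) := by
    rw [div_lt_div_iff₀ h1 (mul_pos ha h1)]
    nlinarith [mul_pos hS h1]
  have hNτ : |a'| * (t1 - t0) < R t0 / 2 := by
    have he : supNorm (deriv R) * (Rmin R / (2 * supNorm (deriv R))) = Rmin R / 2 := by
      field_simp
    have hτσ : supNorm (deriv R) * (t1 - t0) < Rmin R / 2 := by
      have h5 := mul_lt_mul_of_pos_left (lt_of_lt_of_le h2 hσ1) hN0
      rwa [he] at h5
    have hb1 : |a'| * (t1 - t0) ≤ supNorm (deriv R) * (t1 - t0) :=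
      mul_le_mul_of_nonneg_right (hNle t0) h1.le
    linarith [hRmin_le t0]
  have ha'lb : -(R t0 / (2 * (t1 - t0))) < a' := by
    have h4 : |a'| < R t0 / (2 * (t1 - t0)) := by
      rw [lt_div_iff₀ (by positivity)]
      have he2 : |a'| * (2 * (t1 - t0)) = 2 * (|a'| * (t1 - t0)) := by ring
      linarith
    have := neg_abs_le a'
    linarith
  have hpos2 : 0 < a' + (R t0 ^ 2 + S) / (R t0 * (t1 - t0)) := by
    have hhalf : R t0 / (t1 - t0) - R t0 / (2 * (t1 - t0)) = R t0 / (2 * (t1 - t0)) := by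
      field_simp
      ring
    have : 0 < R t0 / (2 * (t1 - t0)) := by positivity
    linarith
  refine ⟨by rw [hd1]; ring, hpos2, ?_⟩
  have heq : a' ^ 2 + 2 * d1h R c t0 t1 - c ^ 2 / R t0 ^ 2 =
      (a' + (R t0 ^ 2 + S) / (R t0 * (t1 - t0))) ^ 2 := by rw [hd1]; ring
  rw [heq, Real.sqrt_sq hpos2.le]
  ring
end
end

section
/- Suppose R belongs to the class 𝓡̃, with t̄ ∈ [0,1) the witness point of conditions (ii)–(iii). Then the set Ξ_R := { ω ∈ (3, σ−1) : 2R_max²/σ² < 2R_min²/(ω+1)² − 2‖R'‖·R_max/(ω+1) < 2R_max²/(ω−1)² + 2‖R'‖·R_max/(ω−1) < −R''(t̄)·R_min } is nonempty; in fact it contains a nonempty open interval. -/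
/-!
The defining inequalities of `Ξ_R` only involve `R_min`, `R_max`, `‖R'‖`, `σ` and `R''(t̄)`, so the
statement is elementary algebra once `0 < R_min ≤ R_max` (compactness of the range of a continuous
periodic function). With `K := −R''(t̄)R_min − ‖R'‖R_max > 0` and `L := 2R_max²/σ² + ‖R'‖R_max`,
the interval is `(1 + √(2R_max²/K), −1 + √(2R_min²/L))`, nonempty by condition (ii). For `ω` in it,
`(ω − 1)² > 2R_max²/K` and `(ω + 1)² < 2R_min²/L` give the outer inequalities, because
`2‖R'‖R_max/(ω ± 1) ≤ ‖R'‖R_max` as `ω ± 1 ≥ 2`; the middle one holds since `R_min ≤ R_max` and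
`ω − 1 < ω + 1`; and `√(2R_min²/L) ≤ σ` gives `ω < σ − 1`.
-/

noncomputable section

open Set

lemma supNorm_nonneg_s14 (f : ℝ → ℝ) : 0 ≤ supNorm f :=
  Real.sSup_nonneg (by rintro _ ⟨t, rfl⟩; exact abs_nonneg _)

lemma Rmin_pos_s14 {R : ℝ → ℝ} (hR : IsCompact (range R)) (hpos : ∀ t, 0 < R t) : 0 < Rmin R := by
  obtain ⟨t, ht⟩ := hR.sInf_mem (range_nonempty R)
  exact (hpos t).trans_eq ht

lemma Rmin_le_Rmax {R : ℝ → ℝ} (hR : IsCompact (range R)) : Rmin R ≤ Rmax R :=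
  csInf_le_csSup (range_nonempty R) hR.bddBelow hR.bddAbove

/-- The set `Ξ_R`, written in terms of `m = R_min`, `M = R_max`, `D = ‖R'‖`, `σ` and
`c = −R''(t̄)·R_min`. -/
def xiSet (m M D σ c : ℝ) : Set ℝ :=
  {ω | ω ∈ Ioo 3 (σ - 1) ∧
    2 * M ^ 2 / σ ^ 2 < 2 * m ^ 2 / (ω + 1) ^ 2 - 2 * D * M / (ω + 1) ∧
    2 * m ^ 2 / (ω + 1) ^ 2 - 2 * D * M / (ω + 1) <
      2 * M ^ 2 / (ω - 1) ^ 2 + 2 * D * M / (ω - 1) ∧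
    2 * M ^ 2 / (ω - 1) ^ 2 + 2 * D * M / (ω - 1) < c}

lemma div_sq_lt_of_sqrt_div_lt {a K x : ℝ} (hK : 0 < K) (hx : √(a / K) < x) : a / x ^ 2 < K := by
  have hx0 : 0 < x := (Real.sqrt_nonneg _).trans_lt hx
  rw [Real.sqrt_lt' hx0, div_lt_iff₀ hK] at hx
  rw [div_lt_iff₀ (by positivity)]
  linarith

lemma lt_div_sq_of_lt_sqrt_div {a L x : ℝ} (hL : 0 < L) (hx0 : 0 < x) (hx : x < √(a / L)) :
    L < a / x ^ 2 := by
  rw [Real.lt_sqrt hx0.le, lt_div_iff₀ hL] at hx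
  rw [lt_div_iff₀ (by positivity)]
  linarith

lemma two_mul_div_le_self {d x : ℝ} (hd : 0 ≤ d) (hx : 2 ≤ x) : 2 * d / x ≤ d := by
  rw [div_le_iff₀ (by linarith)]
  nlinarith

lemma sqrt_two_sq_div_le {m M D σ : ℝ} (hm : 0 < m) (hmM : m ≤ M) (hD : 0 ≤ D) (hσ : 0 < σ) :
    √(2 * m ^ 2 / (2 * M ^ 2 / σ ^ 2 + D * M)) ≤ σ := by
  have hM : 0 < M := hm.trans_le hmM
  rw [Real.sqrt_le_left hσ.le, div_le_iff₀ (by positivity), mul_add,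
    mul_div_cancel₀ _ (by positivity)]
  nlinarith [mul_nonneg (sq_nonneg σ) (mul_nonneg hD hM.le)]

lemma Ioo_subset_xiSet {m M D σ c : ℝ} (hm : 0 < m) (hmM : m ≤ M) (hD : 0 ≤ D) (hσ : 0 < σ)
    (hK : 0 < c - D * M) (hii1 : 3 < 1 + √(2 * M ^ 2 / (c - D * M))) :
    Ioo (1 + √(2 * M ^ 2 / (c - D * M))) (-1 + √(2 * m ^ 2 / (2 * M ^ 2 / σ ^ 2 + D * M))) ⊆
      xiSet m M D σ c := by
  rintro ω ⟨hlo, hhi⟩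
  have hM : 0 < M := hm.trans_le hmM
  have hDM : 0 ≤ D * M := mul_nonneg hD hM.le
  have h3ω : 3 < ω := hii1.trans hlo
  have hminus : 2 * M ^ 2 / (ω - 1) ^ 2 < c - D * M :=
    div_sq_lt_of_sqrt_div_lt hK (by linarith)
  have hplus : 2 * M ^ 2 / σ ^ 2 + D * M < 2 * m ^ 2 / (ω + 1) ^ 2 :=
    lt_div_sq_of_lt_sqrt_div (by positivity) (by linarith) (by linarith)
  have hD_plus : 2 * D * M / (ω + 1) ≤ D * M := by
    rw [mul_assoc]; exact two_mul_div_le_self hDM (by linarith)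
  have hD_minus : 2 * D * M / (ω - 1) ≤ D * M := by
    rw [mul_assoc]; exact two_mul_div_le_self hDM (by linarith)
  have hD_plus_nonneg : 0 ≤ 2 * D * M / (ω + 1) := div_nonneg (by positivity) (by linarith)
  have hD_minus_nonneg : 0 ≤ 2 * D * M / (ω - 1) := div_nonneg (by positivity) (by linarith)
  have hm_div_lt : 2 * m ^ 2 / (ω + 1) ^ 2 < 2 * M ^ 2 / (ω - 1) ^ 2 :=
    calc 2 * m ^ 2 / (ω + 1) ^ 2 ≤ 2 * M ^ 2 / (ω + 1) ^ 2 := by gcongr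
      _ < 2 * M ^ 2 / (ω - 1) ^ 2 := by gcongr <;> nlinarith
  have hσω : ω < σ - 1 := by linarith [sqrt_two_sq_div_le hm hmM hD hσ]
  refine ⟨⟨h3ω, hσω⟩, ?_, ?_, ?_⟩ <;> linarith

theorem XiR_contains_interval_general (R : ℝ → ℝ) (ε : ℝ)
    (hC : ContDiff ℝ 2 R) (hper : ∀ t, R (t + 1) = R t) (hpos : ∀ t, 0 < R t)
    (hσ : 4 < sigmaR R ε)
    (tb : ℝ)
    (hneg : deriv (deriv R) tb * Rmin R + supNorm (deriv R) * Rmax R < 0)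
    (hii1 : 3 < 1 + Real.sqrt (2 * Rmax R ^ 2 /
        (-(deriv (deriv R) tb) * Rmin R - supNorm (deriv R) * Rmax R)))
    (hii2 : 1 + Real.sqrt (2 * Rmax R ^ 2 /
        (-(deriv (deriv R) tb) * Rmin R - supNorm (deriv R) * Rmax R)) <
      -1 + Real.sqrt (2 * Rmin R ^ 2 /
        (2 * Rmax R ^ 2 / sigmaR R ε ^ 2 + supNorm (deriv R) * Rmax R))) :
    ∃ a b : ℝ, a < b ∧
      Set.Ioo a b ⊆
        {ω : ℝ | ω ∈ Set.Ioo 3 (sigmaR R ε - 1) ∧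
          2 * Rmax R ^ 2 / sigmaR R ε ^ 2 <
            2 * Rmin R ^ 2 / (ω + 1) ^ 2 - 2 * supNorm (deriv R) * Rmax R / (ω + 1) ∧
          2 * Rmin R ^ 2 / (ω + 1) ^ 2 - 2 * supNorm (deriv R) * Rmax R / (ω + 1) <
            2 * Rmax R ^ 2 / (ω - 1) ^ 2 + 2 * supNorm (deriv R) * Rmax R / (ω - 1) ∧
          2 * Rmax R ^ 2 / (ω - 1) ^ 2 + 2 * supNorm (deriv R) * Rmax R / (ω - 1) <
            -(deriv (deriv R) tb) * Rmin R} := by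
  have hR : IsCompact (range R) :=
    Function.Periodic.compact_of_continuous hper one_ne_zero hC.continuous
  have hK : 0 < -deriv (deriv R) tb * Rmin R - supNorm (deriv R) * Rmax R := by
    rw [neg_mul]; linarith
  exact ⟨_, _, hii2, Ioo_subset_xiSet (Rmin_pos_s14 hR hpos) (Rmin_le_Rmax hR)
    (supNorm_nonneg_s14 _) (by linarith) hK hii1⟩

/-- If `R` belongs to the class `𝓡̃` with witness point `t̄` of
conditions (ii)–(iii), then the set `Ξ_R` of rotation numbers `ω ∈ (3, σ−1)` with
`2R_max²/σ² < 2R_min²/(ω+1)² − 2‖R'‖R_max/(ω+1) < 2R_max²/(ω−1)² + 2‖R'‖R_max/(ω−1)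
 < −R''(t̄)·R_min` contains a nonempty open interval (in particular it is nonempty). -/
theorem XiR_contains_interval (R : ℝ → ℝ) (ε : ℝ) (hε : ε ∈ Set.Ioo (0 : ℝ) 1)
    (hC : ContDiff ℝ 2 R) (hper : ∀ t, R (t + 1) = R t) (hpos : ∀ t, 0 < R t)
    (hσ : 4 < sigmaR R ε)
    (tb : ℝ) (htb : tb ∈ Set.Ico (0 : ℝ) 1)
    (hneg : deriv (deriv R) tb * Rmin R + supNorm (deriv R) * Rmax R < 0)
    (hii1 : 3 < 1 + Real.sqrt (2 * Rmax R ^ 2 /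
        (-(deriv (deriv R) tb) * Rmin R - supNorm (deriv R) * Rmax R)))
    (hii2 : 1 + Real.sqrt (2 * Rmax R ^ 2 /
        (-(deriv (deriv R) tb) * Rmin R - supNorm (deriv R) * Rmax R)) <
      -1 + Real.sqrt (2 * Rmin R ^ 2 /
        (2 * Rmax R ^ 2 / sigmaR R ε ^ 2 + supNorm (deriv R) * Rmax R)))
    (hiii1 : deriv R tb = 0)
    (hiii2 : deriv (deriv R) tb < -(2 * Rmax R ^ 2 / (sigmaR R ε ^ 2 * Rmin R))) :
    ∃ a b : ℝ, a < b ∧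
      Set.Ioo a b ⊆
        {ω : ℝ | ω ∈ Set.Ioo 3 (sigmaR R ε - 1) ∧
          2 * Rmax R ^ 2 / sigmaR R ε ^ 2 <
            2 * Rmin R ^ 2 / (ω + 1) ^ 2 - 2 * supNorm (deriv R) * Rmax R / (ω + 1) ∧
          2 * Rmin R ^ 2 / (ω + 1) ^ 2 - 2 * supNorm (deriv R) * Rmax R / (ω + 1) <
            2 * Rmax R ^ 2 / (ω - 1) ^ 2 + 2 * supNorm (deriv R) * Rmax R / (ω - 1) ∧
          2 * Rmax R ^ 2 / (ω - 1) ^ 2 + 2 * supNorm (deriv R) * Rmax R / (ω - 1) <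
            -(deriv (deriv R) tb) * Rmin R} :=
  XiR_contains_interval_general R ε hC hper hpos hσ tb hneg hii1 hii2
end
end
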